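/- arXiv:math/0308291 — 12 statements merged into one kernel-verified Lean document; each statement's English description precedes it below -/
import Mathlib

section
/- Let F : C → D be an additive functor between additive categories. If F is an epimorphism of additive categories (i.e., for any pair of additive functors G, G' : D → E, G ∘ F = G' ∘ F implies G = G'), then F is surjective on objects. -/
open CategoryTheory

universe v₃ u₃ v₁ v₂ u₁ u₂

/-!
Functors into the indiscrete category on a type `α` (one morphism between any two objects) are
just functions to `α`, and they are all additive since every hom-group is trivial. If some `d` is
missed by `F`, the indicator of `d` and the constant `False` agree on the image of `F`, so the
corresponding functors become equal after composing with `F` without being equal.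
-/

namespace CategoryTheory

universe v u w w'

/-- Unlike Mathlib's `Codiscrete`, whose hom-types are `Unit`, the hom-types here may live in any
universe `v`. -/
def Indiscrete (α : Type u) : Type u := α

namespace Indiscrete

variable {α : Type u}

instance : Category.{v} (Indiscrete α) where
  Hom _ _ := PUnit
  id _ := ⟨⟩
  comp _ _ := ⟨⟩

instance : Preadditive.{v} (Indiscrete α) where
  homGroup _ _ := inferInstanceAs (AddCommGroup PUnit)

instance {D : Type w} [Category.{w'} D] [Preadditive D] (G : D ⥤ Indiscrete α) :
    G.Additive where
  map_add := rfl

variable {D : Type w} [Category.{w'} D]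

def functor (f : D → α) : D ⥤ Indiscrete α where
  obj := f
  map _ := ⟨⟩

theorem functor_injective :
    Function.Injective (functor : (D → α) → D ⥤ Indiscrete α) :=
  fun _ _ h => funext fun x => congrArg (·.obj x) h

theorem comp_functor {C : Type*} [Category C] (F : C ⥤ D) (f : D → α) :
    F ⋙ (functor f : D ⥤ Indiscrete α) = functor (f ∘ F.obj) :=
  rfl

end Indiscrete

end CategoryTheory

theorem stmt0_general {C : Type u₁} [Category.{v₁} C]
    {D : Type u₂} [Category.{v₂} D] [Preadditive D]
    (F : C ⥤ D)
    (hepi : ∀ {E : Type u₃} [Category.{v₃} E] [Preadditive E]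
      (G G' : D ⥤ E), G.Additive → G'.Additive → F ⋙ G = F ⋙ G' → G = G') :
    ∀ d : D, ∃ c : C, F.obj c = d := by
  refine Function.surjective_of_right_cancellable_Prop fun g₁ g₂ hg => ?_
  let G (g : D → Prop) : D ⥤ Indiscrete (ULift.{u₃} Prop) :=
    Indiscrete.functor (ULift.up ∘ g)
  have hG : G g₁ = G g₂ :=
    hepi _ _ inferInstance inferInstance <| by
      simp only [G, Indiscrete.comp_functor, Function.comp_assoc, hg]
  exact ULift.up_injective.comp_left (Indiscrete.functor_injective hG)

/-- If `F : C ⥤ D` is an epimorphism of additive categories (composition with `F` is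
injective on additive functors out of `D`), then `F` is surjective on objects. -/
theorem stmt0 {C : Type u₁} [Category.{v₁} C] [Preadditive C]
    {D : Type u₂} [Category.{v₂} D] [Preadditive D]
    (F : C ⥤ D) [F.Additive]
    (hepi : ∀ {E : Type u₃} [Category.{v₃} E] [Preadditive E]
      (G G' : D ⥤ E), G.Additive → G'.Additive → F ⋙ G = F ⋙ G' → G = G') :
    ∀ d : D, ∃ c : C, F.obj c = d :=
  stmt0_general F hepi
end

section
/- Let F : C → D be an additive functor between additive categories such that (1) every object in D belongs to the image of F, and (2) for every map α : F X → F Y in D there exist maps α' : X' → Y and π : X' → X in C such that F α' = α ∘ F π and F π is a split epimorphism. Then F is an epimorphism of additive categories. -/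
open CategoryTheory

universe v₃ u₃ v₁ v₂ u₁ u₂

/-- If every object of `D` is in the image of `F`, and every map `α : F X ⟶ F Y` becomes
a map in the image of `F` after composing with a split epimorphism `F π`, then `F` is an
epimorphism of additive categories. -/
theorem stmt1 {C : Type u₁} [Category.{v₁} C] [Preadditive C]
    {D : Type u₂} [Category.{v₂} D] [Preadditive D]
    (F : C ⥤ D) [F.Additive]
    (h1 : ∀ d : D, ∃ c : C, F.obj c = d)
    (h2 : ∀ (X Y : C) (α : F.obj X ⟶ F.obj Y), ∃ (X' : C) (α' : X' ⟶ Y) (π : X' ⟶ X),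
      F.map α' = F.map π ≫ α ∧ IsSplitEpi (F.map π)) :
    ∀ {E : Type u₃} [Category.{v₃} E] [Preadditive E]
      (G G' : D ⥤ E), G.Additive → G'.Additive → F ⋙ G = F ⋙ G' → G = G' := by
  intro E _ _ G G' _ _ h
  have hobj : ∀ d : D, G.obj d = G'.obj d := by
    intro d
    obtain ⟨c, rfl⟩ := h1 d
    exact Functor.congr_obj h c
  refine CategoryTheory.Functor.ext hobj fun d d' f => ?_
  obtain ⟨c, rfl⟩ := h1 d
  obtain ⟨c', rfl⟩ := h1 d'
  obtain ⟨X', α', π, hcomm, hsplit⟩ := h2 c c' f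
  have key : ∀ {a b : C} (g : F.obj a ⟶ F.obj b),
      G.map g = eqToHom (hobj _) ≫ G'.map g ≫ eqToHom (hobj _).symm := by
    intro a b g
    obtain ⟨X', α', π, hcomm, hsplit⟩ := h2 a b g
    have e1 := Functor.congr_hom h α'
    have e2 := Functor.congr_hom h π
    simp only [Functor.comp_map] at e1 e2
    rw [hcomm, Functor.map_comp, Functor.map_comp] at e1
    rw [e2] at e1
    have hse : IsSplitEpi (G'.map (F.map π)) :=
      ⟨⟨⟨G'.map hsplit.exists_splitEpi.some.section_, by
        rw [← G'.map_comp, hsplit.exists_splitEpi.some.id, G'.map_id]⟩⟩⟩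
    have hepi : Epi (G'.map (F.map π)) := hse.epi
    simp only [Category.assoc] at e1
    have e4 := (cancel_epi (G'.map (F.map π))).mp
      ((cancel_epi (eqToHom (hobj (F.obj X')))).mp e1)
    rw [← e4, ← Category.assoc, eqToHom_trans, eqToHom_refl, Category.id_comp]
  exact key f
end

section
/- Let F : C → D be an exact functor between abelian categories which has a right adjoint G : D → C. Then F is an exact quotient functor (i.e., F induces an equivalence C/(Ker F) → D, where C/(Ker F) is the Gabriel quotient) if and only if G is fully faithful. -/
/-!
For exact `F`, the Gabriel class is exactly the class of morphisms inverted by `F`.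
If `F` is a localization functor, precomposition with `F` is fully faithful on functors
out of `D`, so the whiskered unit `F ⟶ F ⋙ G ⋙ F` descends to `𝟭 D ⟶ G ⋙ F`, which is
inverse to the counit; hence `G` is fully faithful. Conversely, a left adjoint whose right
adjoint is fully faithful is the localization at the morphisms it inverts.
-/

open CategoryTheory CategoryTheory.Limits

universe v₁ v₂ u₁ u₂

/-- The class of morphisms of `C` whose kernel and cokernel are killed by `F`;
the Gabriel quotient `C/(Ker F)` is the localization of `C` at this class. -/
def gabrielW {C : Type u₁} [Category.{v₁} C] [Abelian C]
    {D : Type u₂} [Category.{v₂} D] [Abelian D] (F : C ⥤ D) :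
    MorphismProperty C :=
  fun _ _ φ => IsZero (F.obj (kernel φ)) ∧ IsZero (F.obj (cokernel φ))

lemma gabrielW_eq_inverseImage_isomorphisms {C : Type u₁} [Category.{v₁} C] [Abelian C]
    {D : Type u₂} [Category.{v₂} D] [Abelian D] (F : C ⥤ D)
    [PreservesFiniteLimits F] [PreservesFiniteColimits F] :
    gabrielW F = (MorphismProperty.isomorphisms D).inverseImage F := by
  ext X Y φ
  rw [MorphismProperty.inverseImage_iff, MorphismProperty.isomorphisms.iff,
    isIso_iff_mono_and_epi, Preadditive.mono_iff_isZero_kernel,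
    Preadditive.epi_iff_isZero_cokernel]
  exact and_congr (PreservesKernel.iso F φ).isZero_iff (PreservesCokernel.iso F φ).isZero_iff

namespace CategoryTheory.Adjunction

variable {C D : Type*} [Category* C] [Category* D] {F : C ⥤ D} {G : D ⥤ C}

lemma isIso_counit_of_isLocalization (adj : F ⊣ G) (W : MorphismProperty C)
    [F.IsLocalization W] : IsIso adj.counit := by
  let σ : 𝟭 D ⟶ G ⋙ F :=
    (Localization.fullyFaithfulWhiskeringLeft F W D).preimage (Functor.whiskerRight adj.unit F)
  have hσ (X : C) : σ.app (F.obj X) = F.map (adj.unit.app X) :=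
    NatTrans.congr_app ((Localization.fullyFaithfulWhiskeringLeft F W D).map_preimage _) X
  refine ⟨σ, Localization.natTrans_ext F W fun X => ?_, Localization.natTrans_ext F W fun X => ?_⟩
  · -- `σ` is natural also along `adj.counit.app (F.obj X)`, which is not in the image of `F`
    calc adj.counit.app (F.obj X) ≫ σ.app (F.obj X)
        = σ.app (F.obj (G.obj (F.obj X))) ≫ F.map (G.map (adj.counit.app (F.obj X))) :=
          σ.naturality _
      _ = 𝟙 _ := by rw [hσ, ← F.map_comp, right_triangle_components]; exact F.map_id _
  · simp [hσ]

end CategoryTheory.Adjunction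

/-- An exact functor `F` between abelian categories with right adjoint `G` is an exact
quotient functor (it induces an equivalence `C/(Ker F) ≌ D` from the Gabriel quotient)
if and only if `G` is fully faithful. -/
theorem stmt3 {C : Type u₁} [Category.{v₁} C] [Abelian C]
    {D : Type u₂} [Category.{v₂} D] [Abelian D]
    (F : C ⥤ D) (G : D ⥤ C) (adj : F ⊣ G)
    [PreservesFiniteLimits F] [PreservesFiniteColimits F] :
    F.IsLocalization (gabrielW F) ↔ (G.Full ∧ G.Faithful) := by
  rw [gabrielW_eq_inverseImage_isomorphisms F]
  constructor
  · intro _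
    have := adj.isIso_counit_of_isLocalization ((MorphismProperty.isomorphisms D).inverseImage F)
    let hG := adj.fullyFaithfulROfIsIsoCounit
    exact ⟨hG.full, hG.faithful⟩
  · rintro ⟨_, _⟩
    exact adj.isLocalization
end

section
/- Let C be an abelian category, B a Serre subcategory, and Q : C → C/B the quotient functor with a fully faithful right adjoint G. Then G identifies C/B with the full subcategory of objects X in C satisfying Hom_C(B', X) = 0 and Ext¹_C(B', X) = 0 for all objects B' of B. -/
open CategoryTheory CategoryTheory.Limits ZeroObject

universe v₁ v₂ u₁ u₂

namespace Stmt4Aux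

section LocalizationBij

variable {C : Type u₁} [Category.{v₁} C] {D : Type u₂} [Category.{v₂} D]

/-- If `X` is local with respect to `W`, then the localization functor induces a bijection
on morphisms into `X`. -/
lemma bij_of_local (W : MorphismProperty C) (L : C ⥤ D) [L.IsLocalization W] (X : C)
    (hX : ∀ ⦃A A' : C⦄ (f : A ⟶ A'), W f → Function.Bijective (fun g : A' ⟶ X => f ≫ g))
    (A : C) : Function.Bijective (fun a : A ⟶ X => L.map a) := by
  let H : Cᵒᵖ ⥤ Type (max v₁ v₂) := yoneda.obj X ⋙ uliftFunctor.{v₂}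
  have hH : W.op.IsInvertedBy H := by
    intro A' A f hf
    rw [isIso_iff_bijective]
    exact Equiv.ulift.symm.bijective.comp ((hX f.unop hf).comp Equiv.ulift.bijective)
  let F : Dᵒᵖ ⥤ Type (max v₁ v₂) := Localization.lift H hH L.op
  let α : L.op ⋙ F ≅ H := Localization.fac H hH L.op
  let Y' : Dᵒᵖ ⥤ Type (max v₁ v₂) := yoneda.obj (L.obj X) ⋙ uliftFunctor.{v₁}
  let θ : H ⟶ L.op ⋙ Y' :=
    { app := fun A => TypeCat.ofHom (fun g => ULift.up (L.map g.down))
      naturality := fun A B f => by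
        ext g
        exact congrArg ULift.up (L.map_comp _ _) }
  let σ : F ⟶ Y' := Localization.liftNatTrans L.op W.op H (L.op ⋙ Y') F Y' θ
  let u : F.obj (Opposite.op (L.obj X)) := α.inv.app (Opposite.op X) (ULift.up (𝟙 X))
  have hu : α.hom.app (Opposite.op X) u = ULift.up (𝟙 X) :=
    α.inv_hom_id_app_apply (Opposite.op X) _
  have key1 : ∀ (a : A ⟶ X),
      α.hom.app (Opposite.op A) (F.map (L.map a).op u) = ULift.up a := by
    intro a
    have h := NatTrans.naturality_apply (F := L.op ⋙ F) (G := H) α.hom a.op u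
    rw [show (L.op ⋙ F).map a.op u = F.map (L.map a).op u from rfl] at h
    rw [h, hu]
    exact congrArg ULift.up (Category.comp_id a)
  have hσX : σ.app (Opposite.op (L.obj X)) u = ULift.up (𝟙 (L.obj X)) := by
    have h : σ.app (L.op.obj (Opposite.op X)) u
        = θ.app (Opposite.op X) (α.hom.app (Opposite.op X) u) :=
      ConcreteCategory.congr_hom (Localization.liftNatTrans_app L.op W.op H (L.op ⋙ Y') F Y' θ
        (Opposite.op X)) u
    rw [hu] at h
    exact h.trans (congrArg ULift.up (L.map_id X))
  have key2 : ∀ (g : L.obj A ⟶ L.obj X),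
      σ.app (Opposite.op (L.obj A)) (F.map g.op u) = ULift.up g := by
    intro g
    have h := NatTrans.naturality_apply (F := F) (G := Y') σ g.op u
    rw [h, hσX]
    exact congrArg ULift.up (Category.comp_id g)
  have key3 : ∀ (g : L.obj A ⟶ L.obj X),
      L.map ((α.hom.app (Opposite.op A) (F.map g.op u)).down) = g := by
    intro g
    have h : σ.app (L.op.obj (Opposite.op A)) (F.map g.op u)
        = θ.app (Opposite.op A) (α.hom.app (Opposite.op A) (F.map g.op u)) :=
      ConcreteCategory.congr_hom (Localization.liftNatTrans_app L.op W.op H (L.op ⋙ Y') F Y' θ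
        (Opposite.op A)) (F.map g.op u)
    exact (congrArg ULift.down (((key2 g).symm.trans h))).symm
  constructor
  · intro a b hab
    have hab' : L.map a = L.map b := hab
    have h1 := key1 a
    rw [hab'] at h1
    rw [key1 b] at h1
    exact (congrArg ULift.down h1).symm
  · intro g
    exact ⟨(α.hom.app (Opposite.op A) (F.map g.op u)).down, key3 g⟩

end LocalizationBij

section Abelian

variable {C : Type u₁} [Category.{v₁} C] [Abelian C]

/-- A short complex `Z ⟶ Z' ⟶ 0` with first map an isomorphism is short exact. -/
lemma shortExact_iso_zero {Z Z' : C} (f : Z ⟶ Z') [IsIso f] :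
    (ShortComplex.mk f (0 : Z' ⟶ (0 : C)) comp_zero).ShortExact := by
  have hepi : Epi (0 : Z' ⟶ (0 : C)) := ⟨fun g h _ => (isZero_zero C).eq_of_src g h⟩
  have hexact : (ShortComplex.mk f (0 : Z' ⟶ (0 : C)) comp_zero).Exact := by
    apply ShortComplex.exact_of_g_is_cokernel
    exact CokernelCofork.IsColimit.ofπ _ _
      (fun {T} k hk => 0)
      (fun {T} k hk => by
        have hk' : f ≫ k = 0 := hk
        have hk0 : k = 0 := by rw [← cancel_epi f, hk', comp_zero]
        show (0 : Z' ⟶ (0 : C)) ≫ 0 = k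
        rw [zero_comp, hk0])
      (fun {T} k hk m hm => (isZero_zero C).eq_of_src m 0)
  exact { exact := hexact, mono_f := inferInstance, epi_g := hepi }

/-- An object satisfying the two orthogonality conditions is local with respect to
morphisms with kernel and cokernel satisfying `P`. -/
lemma local_of_conditions (P : C → Prop)
    (hiso : ∀ {Z Z' : C}, (Z ≅ Z') → P Z → P Z') {X : C}
    (h1 : ∀ B', P B' → ∀ f : B' ⟶ X, f = 0)
    (h2 : ∀ B', P B' → ∀ (E : C) (i : X ⟶ E) (p : E ⟶ B') (w : i ≫ p = 0),
      (ShortComplex.mk i p w).ShortExact → ∃ r : E ⟶ X, i ≫ r = 𝟙 X)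
    {A A' : C} (φ : A ⟶ A') (hφ : P (kernel φ) ∧ P (cokernel φ)) :
    Function.Bijective (fun g : A' ⟶ X => φ ≫ g) := by
  obtain ⟨hk, hc⟩ := hφ
  let e := factorThruImage φ
  let m := image.ι φ
  have hfac : e ≫ m = φ := image.fac φ
  have hkere : P (kernel e) :=
    hiso (kernelIsoOfEq hfac.symm ≪≫ kernelCompMono e m) hk
  have hcokm : P (cokernel m) :=
    hiso (cokernelIsoOfEq hfac.symm ≪≫ cokernelEpiComp e m) hc
  have hbm : Function.Bijective (fun g : A' ⟶ X => m ≫ g) := by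
    constructor
    · intro g₁ g₂ hg
      dsimp at hg
      have hsub : m ≫ (g₁ - g₂) = 0 := by rw [Preadditive.comp_sub, hg, sub_self]
      have : g₁ - g₂ = cokernel.π m ≫ cokernel.desc m (g₁ - g₂) hsub :=
        (cokernel.π_desc m (g₁ - g₂) hsub).symm
      rw [h1 _ hcokm (cokernel.desc m (g₁ - g₂) hsub), comp_zero] at this
      exact sub_eq_zero.1 this
    · intro v
      -- pushout of `v : image φ ⟶ X` along the mono `m : image φ ⟶ A'`
      let E := pushout v m
      let i : X ⟶ E := pushout.inl v m
      haveI : Mono m := inferInstance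
      haveI hmono : Mono i := Abelian.mono_pushout_of_mono_g v m
      let p : E ⟶ cokernel m :=
        pushout.desc 0 (cokernel.π m) (by rw [comp_zero, cokernel.condition])
      have w : i ≫ p = 0 := pushout.inl_desc _ _ _
      have hepi : Epi p := by
        have h' : pushout.inr v m ≫ p = cokernel.π m := pushout.inr_desc _ _ _
        have : Epi (pushout.inr v m ≫ p) := by rw [h']; infer_instance
        exact epi_of_epi (pushout.inr v m) p
      have hcolim : IsColimit (CokernelCofork.ofπ p w) := by
        exact CokernelCofork.IsColimit.ofπ' p w (fun {T} k hk => by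
          have hmk : m ≫ (pushout.inr v m ≫ k) = 0 := by
            rw [← Category.assoc, ← pushout.condition, Category.assoc, hk, comp_zero]
          refine ⟨cokernel.desc m (pushout.inr v m ≫ k) hmk, ?_⟩
          apply pushout.hom_ext
          · rw [← Category.assoc, pushout.inl_desc, zero_comp, hk]
          · rw [← Category.assoc, pushout.inr_desc, cokernel.π_desc])
      have hSE : (ShortComplex.mk i p w).ShortExact :=
        { exact := ShortComplex.exact_of_g_is_cokernel _ hcolim
          mono_f := hmono
          epi_g := hepi }
      obtain ⟨r, hr⟩ := h2 _ hcokm E i p w hSE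
      refine ⟨pushout.inr v m ≫ r, ?_⟩
      dsimp
      rw [← Category.assoc, ← pushout.condition, Category.assoc, hr, Category.comp_id]
  have hbe : Function.Bijective (fun g : image φ ⟶ X => e ≫ g) := by
    constructor
    · intro g₁ g₂ hg
      exact (cancel_epi e).1 hg
    · intro u
      have h0 : kernel.ι e ≫ u = 0 := h1 _ hkere _
      exact ⟨Abelian.epiDesc e u h0, Abelian.comp_epiDesc e u h0⟩
  have : (fun g : A' ⟶ X => φ ≫ g)
      = (fun g : image φ ⟶ X => e ≫ g) ∘ (fun g : A' ⟶ X => m ≫ g) := by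
    funext g
    dsimp
    rw [← Category.assoc, hfac]
  rw [this]
  exact hbe.comp hbm

end Abelian

end Stmt4Aux

/-- Let `B` be a Serre subcategory (given by the predicate `P`) of an abelian category `C`,
`Q : C ⥤ D` the Gabriel quotient functor (the localization at the class of maps whose kernel
and cokernel lie in `B`), with a fully faithful right adjoint `G`. Then the essential image
of `G` consists exactly of the objects `X` with `Hom(B', X) = 0` and `Ext¹(B', X) = 0`
(i.e. every short exact sequence `0 → X → E → B' → 0` splits) for all `B'` in `B`. -/
theorem stmt4 {C : Type u₁} [Category.{v₁} C] [Abelian C]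
    {D : Type u₂} [Category.{v₂} D] [Abelian D]
    (P : C → Prop)
    (hSerre : ∀ (S : ShortComplex C), S.ShortExact → (P S.X₂ ↔ (P S.X₁ ∧ P S.X₃)))
    (Q : C ⥤ D) (G : D ⥤ C) (adj : Q ⊣ G) [G.Full] [G.Faithful]
    [Q.IsLocalization (fun _ _ φ => P (kernel φ) ∧ P (cokernel φ) : MorphismProperty C)] :
    ∀ X : C, G.essImage X ↔
      (∀ B' : C, P B' →
        (∀ f : B' ⟶ X, f = 0) ∧
        (∀ (E : C) (i : X ⟶ E) (p : E ⟶ B') (w : i ≫ p = 0),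
          (ShortComplex.mk i p w).ShortExact → ∃ r : E ⟶ X, i ≫ r = 𝟙 X)) := by
  intro X
  set W : MorphismProperty C := (fun _ _ φ => P (kernel φ) ∧ P (cokernel φ) : MorphismProperty C) with hW
  haveI : Q.IsLeftAdjoint := ⟨G, ⟨adj⟩⟩
  haveI : G.IsRightAdjoint := ⟨Q, ⟨adj⟩⟩
  -- `P` holds for the zero object (as soon as it holds somewhere), and is closed under isos
  have hP0 : ∀ {Z : C}, P Z → P (0 : C) := fun {Z} hZ =>
    ((hSerre _ (Stmt4Aux.shortExact_iso_zero (𝟙 Z))).1 hZ).2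
  have hiso : ∀ {Z Z' : C}, (Z ≅ Z') → P Z → P Z' := fun {Z Z'} ι hZ =>
    (hSerre _ (Stmt4Aux.shortExact_iso_zero ι.hom)).2 ⟨hZ, hP0 hZ⟩
  constructor
  · rintro ⟨Y, ⟨eIso⟩⟩ B' hB'
    constructor
    · intro f
      have hW0 : W (0 : B' ⟶ B') :=
        ⟨hiso kernelZeroIsoSource.symm hB', hiso cokernelZeroIsoTarget.symm hB'⟩
      have hinv : IsIso (Q.map (0 : B' ⟶ B')) := Localization.inverts Q W _ hW0
      rw [Q.map_zero] at hinv
      have hid : 𝟙 (Q.obj B') = 0 := by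
        rw [← IsIso.hom_inv_id (0 : Q.obj B' ⟶ Q.obj B'), zero_comp]
      set g := (adj.homEquiv B' Y).symm (f ≫ eIso.inv) with hg
      have hgz : g = 0 := by rw [← Category.id_comp g, hid, zero_comp]
      have : f ≫ eIso.inv = adj.homEquiv B' Y g := ((adj.homEquiv B' Y).apply_symm_apply _).symm
      rw [hgz, Adjunction.homEquiv_unit, G.map_zero, comp_zero] at this
      calc f = (f ≫ eIso.inv) ≫ eIso.hom := by rw [Category.assoc, eIso.inv_hom_id,
        Category.comp_id]
        _ = 0 := by rw [this, zero_comp]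
    · intro E i p w hSE
      haveI := hSE.mono_f
      haveI := hSE.epi_g
      have hki : P (kernel i) := hiso (kernel.ofMono i).symm (hP0 hB')
      have hci : P (cokernel i) := by
        refine hiso ?_ hB'
        exact (IsColimit.coconePointUniqueUpToIso (cokernelIsCokernel i)
          hSE.exact.gIsCokernel).symm
      have hWi : W i := ⟨hki, hci⟩
      have hinv : IsIso (Q.map i) := Localization.inverts Q W i hWi
      set g := (adj.homEquiv X Y).symm eIso.inv with hg
      set r0 := adj.homEquiv E Y (inv (Q.map i) ≫ g) with hr0
      have hir0 : i ≫ r0 = eIso.inv := by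
        rw [hr0, ← Adjunction.homEquiv_naturality_left, ← Category.assoc,
          IsIso.hom_inv_id, Category.id_comp, hg, (adj.homEquiv X Y).apply_symm_apply]
      exact ⟨r0 ≫ eIso.hom, by rw [← Category.assoc, hir0, eIso.inv_hom_id]⟩
  · intro h
    have hloc : ∀ ⦃A A' : C⦄ (f : A ⟶ A'), W f →
        Function.Bijective (fun g : A' ⟶ X => f ≫ g) := fun A A' f hf =>
      Stmt4Aux.local_of_conditions P hiso
        (fun B' hB' => (h B' hB').1) (fun B' hB' => (h B' hB').2) f hf
    have hbij := Stmt4Aux.bij_of_local W Q X hloc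
    set η := adj.unit.app X with hη
    have hb : ∀ A : C, Function.Bijective (fun a : A ⟶ X => a ≫ η) := by
      intro A
      have heq : (fun a : A ⟶ X => a ≫ η)
          = (adj.homEquiv A (Q.obj X)) ∘ (fun a : A ⟶ X => Q.map a) := by
        funext a
        dsimp
        rw [Adjunction.homEquiv_unit, hη]
        simp
      rw [heq]
      exact (adj.homEquiv A (Q.obj X)).bijective.comp (hbij A)
    obtain ⟨r, hr⟩ := (hb (G.obj (Q.obj X))).2 (𝟙 (G.obj (Q.obj X)))
    have hri : η ≫ r = 𝟙 X := by
      apply (hb X).1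
      dsimp at hr ⊢
      rw [Category.assoc, hr, Category.comp_id, Category.id_comp]
    haveI : IsIso η := ⟨r, hri, hr⟩
    exact ⟨Q.obj X, ⟨(asIso η).symm⟩⟩
end

section
/- Let F : C → D be an exact functor between triangulated categories which induces an equivalence C/B → D for some triangulated subcategory B of C (Verdier quotient). Then the ideal of maps annihilated by F (the maps φ with F φ = 0) equals the ideal of all maps in C which factor through some object of B. -/
open CategoryTheory CategoryTheory.Limits CategoryTheory.Pretriangulated

open ZeroObject

universe v₁ v₂ u₁ u₂

namespace Stmt5Aux

/-- multiplicative closure of a morphism property -/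
inductive MClos {C : Type*} [Category C] (W : MorphismProperty C) :
    ∀ {X Y : C}, (X ⟶ Y) → Prop
  | of {X Y : C} (f : X ⟶ Y) (hf : W f) : MClos W f
  | id (X : C) : MClos W (𝟙 X)
  | comp {X Y Z : C} (f : X ⟶ Y) (g : Y ⟶ Z) (hf : MClos W f) (hg : MClos W g) :
      MClos W (f ≫ g)

/-- multiplicative closure as a `MorphismProperty` -/
def mclos {C : Type*} [Category C] (W : MorphismProperty C) : MorphismProperty C :=
  fun _ _ f => MClos W f

instance mclos_mult {C : Type*} [Category C] (W : MorphismProperty C) :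
    (mclos W).IsMultiplicative where
  id_mem X := MClos.id X
  comp_mem f g hf hg := MClos.comp f g hf hg

section

variable {C : Type u₁} [Category.{v₁} C] [HasZeroObject C] [HasShift C ℤ]
    [Preadditive C] [∀ n : ℤ, (shiftFunctor C n).Additive] [Pretriangulated C]
    (B : ObjectProperty C) [B.IsTriangulated]

/-- the factorization predicate -/
def Jfac {X Y : C} (φ : X ⟶ Y) : Prop :=
  ∃ (Z : C) (_ : B Z) (g : X ⟶ Z) (h : Z ⟶ Y), φ = g ≫ h

variable {B}

lemma Jfac.of_isoClosure {X Y Z : C} (hZ : B.isoClosure Z)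
    (g : X ⟶ Z) (h : Z ⟶ Y) {φ : X ⟶ Y} (fac : φ = g ≫ h) : Jfac B φ := by
  obtain ⟨Z', hZ', ⟨e⟩⟩ := hZ
  exact ⟨Z', hZ', g ≫ e.hom, e.inv ≫ h, by simp [fac]⟩

lemma Jfac.add {X Y : C} {φ₁ φ₂ : X ⟶ Y} (h₁ : Jfac B φ₁) (h₂ : Jfac B φ₂) :
    Jfac B (φ₁ + φ₂) := by
  obtain ⟨Z₁, hZ₁, g₁, k₁, rfl⟩ := h₁
  obtain ⟨Z₂, hZ₂, g₂, k₂, rfl⟩ := h₂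
  refine Jfac.of_isoClosure
    (B.ext_of_isTriangulatedClosed₂' (binaryBiproductTriangle Z₁ Z₂)
      (binaryBiproductTriangle_distinguished Z₁ Z₂) hZ₁ hZ₂)
    (biprod.lift g₁ g₂) (biprod.desc k₁ k₂) ?_
  exact biprod.lift_desc.symm

lemma descend_of {Y M : C} (a : Y ⟶ M) (haW : B.trW a) {X : C} (φ : X ⟶ Y)
    (hφ : Jfac B (φ ≫ a)) : Jfac B φ := by
  obtain ⟨V, hV, g, m, hgm⟩ := hφ
  obtain ⟨U, p, q, H, hU⟩ := haW
  have e1 : a ≫ p = 0 := comp_distTriang_mor_zero₁₂ _ H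
  have h1 : g ≫ (m ≫ p) = 0 := by
    rw [← Category.assoc, ← hgm, Category.assoc, e1, comp_zero]
  obtain ⟨N, k, d, HN⟩ := distinguished_cocone_triangle₁ (m ≫ p)
  obtain ⟨g', hg'⟩ := Triangle.coyoneda_exact₂ _ HN g h1
  obtain ⟨g', hg'⟩ : ∃ g' : X ⟶ N, g = g' ≫ k := ⟨g', hg'⟩
  have e2 : k ≫ (m ≫ p) = 0 := comp_distTriang_mor_zero₁₂ _ HN
  have h2 : (k ≫ m) ≫ p = 0 := by rw [Category.assoc, e2]
  obtain ⟨lam, hlam⟩ := Triangle.coyoneda_exact₂ _ H (k ≫ m) h2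
  obtain ⟨lam, hlam⟩ : ∃ lam : N ⟶ Y, k ≫ m = lam ≫ a := ⟨lam, hlam⟩
  have h3 : (φ - g' ≫ lam) ≫ a = 0 := by
    rw [Preadditive.sub_comp, Category.assoc, ← hlam, ← Category.assoc, ← hg',
      hgm, sub_self]
  obtain ⟨h', hh'⟩ := Triangle.coyoneda_exact₂ _ (inv_rot_of_distTriang _ H)
    (φ - g' ≫ lam) h3
  obtain ⟨h', hh'⟩ : ∃ h' : X ⟶ (U⟦(-1 : ℤ)⟧),
      φ - g' ≫ lam = h' ≫ (Triangle.mk a p q).invRotate.mor₁ := ⟨h', hh'⟩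
  rw [eq_add_of_sub_eq hh']
  refine Jfac.add ?_ ?_
  · exact ⟨_, B.le_shift (-1) U hU, h', (Triangle.mk a p q).invRotate.mor₁, rfl⟩
  · exact Jfac.of_isoClosure (B.ext_of_isTriangulatedClosed₁' _ HN hV hU) g' lam rfl

/-- Key descent lemma: if `φ ≫ a` factors through `B` and `a` is in the
multiplicative closure of `B.trW`, then `φ` factors through `B`. -/
lemma descend {Y M : C} {a : Y ⟶ M} (ha : mclos B.trW a) :
    ∀ {X : C} (φ : X ⟶ Y), Jfac B (φ ≫ a) → Jfac B φ := by
  induction ha with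
  | of a haW => exact fun φ hφ => descend_of a haW φ hφ
  | id X => intro X' φ hφ; simpa using hφ
  | comp a b _ _ iha ihb =>
    intro X φ hφ
    exact iha φ (ihb (φ ≫ a) (by rwa [Category.assoc]))

/-- Ore condition for the multiplicative closure. -/
lemma exists_lf {X' X : C} {s : X' ⟶ X} (hs : mclos B.trW s) :
    ∀ ⦃Y : C⦄ (f : X' ⟶ Y),
      ∃ (ψ : (mclos B.trW).LeftFraction X Y), f ≫ ψ.s = s ≫ ψ.f := by
  induction hs with
  | of s hsW =>
    intro Y f
    obtain ⟨Z, g, h, H, mem⟩ := hsW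
    obtain ⟨Y', s', f', mem'⟩ := distinguished_cocone_triangle₂ (h ≫ f⟦(1 : ℤ)⟧')
    obtain ⟨b, hb₁, _⟩ :=
      complete_distinguished_triangle_morphism₂ _ _ H mem' f (𝟙 Z) (Category.id_comp _).symm
    exact ⟨MorphismProperty.LeftFraction.mk b s' (MClos.of _ ⟨_, _, _, mem', mem⟩),
      hb₁.symm⟩
  | id X =>
    intro Y f
    exact ⟨MorphismProperty.LeftFraction.mk f (𝟙 Y) (MClos.id Y), by simp⟩
  | comp a b _ _ iha ihb =>
    intro Y f
    obtain ⟨ψ₁, hψ₁⟩ := iha f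
    obtain ⟨ψ₂, hψ₂⟩ := ihb ψ₁.f
    refine ⟨MorphismProperty.LeftFraction.mk ψ₂.f (ψ₁.s ≫ ψ₂.s)
      (MClos.comp _ _ ψ₁.hs ψ₂.hs), ?_⟩
    dsimp
    rw [← Category.assoc, hψ₁, Category.assoc, hψ₂, ← Category.assoc]

/-- ext condition for the multiplicative closure. -/
lemma ext_lf {X' X : C} {s : X' ⟶ X} (hs : mclos B.trW s) :
    ∀ ⦃Y : C⦄ (f₁ f₂ : X ⟶ Y), s ≫ f₁ = s ≫ f₂ →
      ∃ (Y' : C) (t : Y ⟶ Y') (_ : mclos B.trW t), f₁ ≫ t = f₂ ≫ t := by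
  induction hs with
  | of s hsW =>
    intro Y f₁ f₂ hf
    obtain ⟨Z, g, h, H, mem⟩ := hsW
    have hf₂ : s ≫ (f₁ - f₂) = 0 := by rw [Preadditive.comp_sub, hf, sub_self]
    obtain ⟨q, hq⟩ := Triangle.yoneda_exact₂ _ H _ hf₂
    obtain ⟨q, hq⟩ : ∃ q : Z ⟶ Y, f₁ - f₂ = g ≫ q := ⟨q, hq⟩
    obtain ⟨Y', r, t, mem'⟩ := distinguished_cocone_triangle q
    refine ⟨Y', r, MClos.of _ ⟨_, _, _, rot_of_distTriang _ mem', B.le_shift 1 _ mem⟩, ?_⟩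
    have eq : q ≫ r = 0 := comp_distTriang_mor_zero₁₂ _ mem'
    rw [← sub_eq_zero, ← Preadditive.sub_comp, hq, Category.assoc, eq, comp_zero]
  | id X =>
    intro Y f₁ f₂ hf
    exact ⟨Y, 𝟙 Y, MClos.id Y, by simpa using hf⟩
  | comp a b _ _ iha ihb =>
    intro Y f₁ f₂ hf
    obtain ⟨Y₁, t₁, ht₁, h1⟩ := iha (b ≫ f₁) (b ≫ f₂) (by simpa using hf)
    obtain ⟨Y₂, t₂, ht₂, h2⟩ := ihb (f₁ ≫ t₁) (f₂ ≫ t₁) (by simpa using h1)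
    exact ⟨Y₂, t₁ ≫ t₂, MClos.comp _ _ ht₁ ht₂, by
      simpa only [Category.assoc] using h2⟩

instance : (mclos B.trW).HasLeftCalculusOfFractions where
  exists_leftFraction X Y φ := exists_lf φ.hs φ.f
  ext _ _ _ f₁ f₂ s hs hf := ext_lf hs f₁ f₂ hf

end

end Stmt5Aux

open Stmt5Aux in
/-- If an exact functor `F : C ⥤ D` between triangulated categories induces an equivalence
`C/B ≌ D` (i.e. `F` is a localization at the class `B.trW` of maps with cone in `B`), then
the maps annihilated by `F` are exactly the maps factoring through an object of `B`. -/
theorem stmt5 {C : Type u₁} [Category.{v₁} C] [HasZeroObject C] [HasShift C ℤ]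
    [Preadditive C] [∀ n : ℤ, (shiftFunctor C n).Additive] [Pretriangulated C]
    {D : Type u₂} [Category.{v₂} D] [HasZeroObject D] [HasShift D ℤ]
    [Preadditive D] [∀ n : ℤ, (shiftFunctor D n).Additive] [Pretriangulated D]
    (B : ObjectProperty C) [B.IsTriangulated]
    (F : C ⥤ D) [F.CommShift ℤ] [F.IsTriangulated] [F.IsLocalization B.trW] :
    ∀ {X Y : C} (φ : X ⟶ Y),
      F.map φ = 0 ↔ ∃ (Z : C) (_ : B Z) (g : X ⟶ Z) (h : Z ⟶ Y), φ = g ≫ h := by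
  intro X Y φ
  constructor
  · intro h
    -- `F` is a localization at the multiplicative closure of `B.trW`
    have hinv : (mclos B.trW).IsInvertedBy F := by
      intro X Y f hf
      induction hf with
      | of f hf => exact Localization.inverts F B.trW f hf
      | id X => rw [F.map_id]; infer_instance
      | comp f g hf hg ihf ihg =>
        rw [F.map_comp]
        have := ihf
        have := ihg
        infer_instance
    haveI : (𝟭 D).IsLocalization (MorphismProperty.isomorphisms D) :=
      Functor.IsLocalization.for_id _ le_rfl
    haveI := Localization.essSurj F B.trW
    have hmap : MorphismProperty.isomorphisms D ≤ (mclos B.trW).map F := by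
      intro d₁ d₂ g hg
      have : IsIso g := hg
      exact ⟨F.objPreimage d₁, F.objPreimage d₁, 𝟙 _, MClos.id _,
        ⟨Arrow.isoMk (F.objObjPreimageIso d₁) (F.objObjPreimageIso d₁ ≪≫ asIso g)
          (by simp)⟩⟩
    have hloc : (F ⋙ 𝟭 D).IsLocalization (mclos B.trW) :=
      Functor.IsLocalization.comp (L₁ := F) (L₂ := 𝟭 D) (W₁ := B.trW)
        (W₂ := MorphismProperty.isomorphisms D) (mclos B.trW)
        (fun X Y f hf => hinv f hf)
        (fun X Y f hf => MClos.of f hf) hmap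
    rw [Functor.comp_id] at hloc
    haveI := hloc
    have h0 : F.map φ = F.map (0 : X ⟶ Y) := by rw [h, F.map_zero]
    rw [MorphismProperty.map_eq_iff_postcomp F (mclos B.trW)] at h0
    obtain ⟨Z', s, hs, fac⟩ := h0
    refine descend hs φ ?_
    rw [fac, zero_comp]
    obtain ⟨Z₀, hZ₀iso, hZ₀⟩ := B.exists_prop_of_containsZero
    exact ⟨Z₀, hZ₀, 0, 0, by simp⟩
  · rintro ⟨Z, hZ, g, k, rfl⟩
    have hw : B.trW (0 : Z ⟶ 0) :=
      ObjectProperty.trW.mk (P := B)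
        (rot_of_distTriang _ (contractible_distinguished Z)) (B.le_shift 1 Z hZ)
    have := Localization.inverts F B.trW _ hw
    have hzero : IsZero (F.obj Z) := by
      have h0 : IsZero (F.obj (0 : C)) := by
        rw [IsZero.iff_id_eq_zero, ← F.map_id, id_zero, F.map_zero]
      exact h0.of_iso (asIso (F.map (0 : Z ⟶ 0)))
    rw [F.map_comp, hzero.eq_of_src (F.map k) 0, comp_zero]
end

section
/- Let F : C → D be an exact functor between triangulated categories. Then F induces an equivalence C/(Ker F) → D if and only if: (a) every object of D is isomorphic to an object in the image of F, and (b) for every map α : F X → F Y in D there exist maps α' : X' → Y and π : X' → X in C such that F α' = α ∘ F π and F π is an isomorphism. -/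
open CategoryTheory CategoryTheory.Limits CategoryTheory.Pretriangulated

universe v₁ v₂ u₁ u₂

variable {C : Type u₁} [Category.{v₁} C] [HasZeroObject C] [HasShift C ℤ]
  [Preadditive C] [∀ n : ℤ, (shiftFunctor C n).Additive] [Pretriangulated C]
  {D : Type u₂} [Category.{v₂} D] [HasZeroObject D] [HasShift D ℤ]
  [Preadditive D] [∀ n : ℤ, (shiftFunctor D n).Additive] [Pretriangulated D]

/-- The class of maps of `C` whose cone is killed by `F`; the Verdier quotient
`C/(Ker F)` is the localization of `C` at this class. -/
def kerW (F : C ⥤ D) : MorphismProperty C :=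
  fun X Y f => ∃ (Z : C) (g : Y ⟶ Z) (h : Z ⟶ X⟦(1 : ℤ)⟧),
    (Triangle.mk f g h ∈ distTriang C) ∧ IsZero (F.obj Z)

section Aux

variable (F : C ⥤ D) [F.CommShift ℤ] [F.IsTriangulated]

lemma kerW_iff_isIso {X Y : C} (f : X ⟶ Y) : kerW F f ↔ IsIso (F.map f) := by
  constructor
  · rintro ⟨Z, g, h, hT, hZ⟩
    exact (Triangle.isZero₃_iff_isIso₁ _ (F.map_distinguished _ hT)).1 hZ
  · intro hf
    obtain ⟨Z, g, h, hT⟩ := distinguished_cocone_triangle f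
    exact ⟨Z, g, h, hT, (Triangle.isZero₃_iff_isIso₁ _ (F.map_distinguished _ hT)).2 hf⟩

lemma isZero_F_shift {Z : C} (hZ : IsZero (F.obj Z)) (n : ℤ) :
    IsZero (F.obj (Z⟦n⟧)) := by
  refine IsZero.of_iso ?_ ((F.commShiftIso n).app Z)
  exact (shiftFunctor D n).map_isZero hZ

lemma kerW_iff' {Y Z : C} (s : Y ⟶ Z) :
    kerW F s ↔ ∃ (X : C) (f : X ⟶ Y) (h : Z ⟶ X⟦(1 : ℤ)⟧),
      (Triangle.mk f s h ∈ distTriang C) ∧ IsZero (F.obj X) := by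
  constructor
  · rintro ⟨Z₀, g, h, H, mem⟩
    exact ⟨_, _, _, inv_rot_of_distTriang _ H, isZero_F_shift F mem (-1)⟩
  · rintro ⟨Z₀, g, h, H, mem⟩
    exact ⟨_, _, _, rot_of_distTriang _ H, isZero_F_shift F mem 1⟩

instance : (kerW F).IsMultiplicative where
  id_mem X := (kerW_iff_isIso F _).2 (by rw [F.map_id]; infer_instance)
  comp_mem f g hf hg := by
    rw [kerW_iff_isIso] at hf hg ⊢
    rw [F.map_comp]
    exact IsIso.comp_isIso

instance : (kerW F).HasRightCalculusOfFractions where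
  exists_rightFraction X Y φ := by
    obtain ⟨Z, f, g, H, mem⟩ := φ.hs
    obtain ⟨X', f', h', mem'⟩ := distinguished_cocone_triangle₁ (φ.f ≫ f)
    obtain ⟨a, ⟨ha₁, _⟩⟩ := complete_distinguished_triangle_morphism₁ _ _
      mem' H φ.f (𝟙 Z) (by exact Category.comp_id _)
    exact ⟨MorphismProperty.RightFraction.mk f' ⟨_, _, _, mem', mem⟩ a, ha₁⟩
  ext Y Z Z' f₁ f₂ s hs hf₁ := by
    rw [kerW_iff' F] at hs
    obtain ⟨Z₀, g, h, H, mem⟩ := hs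
    have hf₂ : (f₁ - f₂) ≫ s = 0 := by rw [Preadditive.sub_comp, hf₁, sub_self]
    obtain ⟨q, hq⟩ : ∃ q : Y ⟶ Z₀, f₁ - f₂ = q ≫ g := Triangle.coyoneda_exact₂ _ H _ hf₂
    obtain ⟨Y', r, t, mem'⟩ := distinguished_cocone_triangle₁ q
    refine ⟨Y', r, ⟨_, _, _, mem', mem⟩, ?_⟩
    have eq := comp_distTriang_mor_zero₁₂ _ mem'
    replace eq : r ≫ q = 0 := eq
    rw [← sub_eq_zero, ← Preadditive.comp_sub, hq, reassoc_of% eq, zero_comp]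

lemma kerW_isInvertedBy : (kerW F).IsInvertedBy F :=
  fun _ _ f hf => (kerW_iff_isIso F f).1 hf

/-- The key cancellation lemma: if `F c = 0` and condition (b) holds, then `c` is
annihilated by precomposition with a map inverted by `F`. -/
lemma cancel_of_F_zero
    (hb : ∀ (X Y : C) (α : F.obj X ⟶ F.obj Y), ∃ (X' : C) (α' : X' ⟶ Y) (π : X' ⟶ X),
      F.map α' = F.map π ≫ α ∧ IsIso (F.map π))
    {X Y : C} (c : X ⟶ Y) (hc : F.map c = 0) :
    ∃ (V : C) (φ : V ⟶ X), IsIso (F.map φ) ∧ φ ≫ c = 0 := by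
  obtain ⟨Z, h, w, hT⟩ := distinguished_cocone_triangle₁ c
  have hT' := F.map_distinguished _ hT
  obtain ⟨s, hs⟩ : ∃ s : F.obj X ⟶ F.obj Z, 𝟙 (F.obj X) = s ≫ F.map h :=
    Triangle.coyoneda_exact₂ _ hT' (𝟙 (F.obj X))
    (by exact (Category.id_comp _).trans hc)
  obtain ⟨V, s', π, h1, h2⟩ := hb X Z s
  refine ⟨V, s' ≫ h, ?_, ?_⟩
  · have : F.map (s' ≫ h) = F.map π := by
      rw [F.map_comp, h1, Category.assoc, ← hs]
      simp
    rw [this]; exact h2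
  · have := comp_distTriang_mor_zero₁₂ _ hT
    replace this : h ≫ c = 0 := this
    rw [Category.assoc, this, comp_zero]

end Aux

/-- An exact functor `F : C ⥤ D` between triangulated categories induces an equivalence
`C/(Ker F) ≌ D` if and only if every object of `D` is isomorphic to one in the image of `F`,
and every map `α : F X ⟶ F Y` satisfies `F α' = α ∘ F π` for some `α' : X' ⟶ Y`,
`π : X' ⟶ X` with `F π` invertible. -/
theorem stmt6 (F : C ⥤ D) [F.CommShift ℤ] [F.IsTriangulated] :
    F.IsLocalization (kerW F) ↔
      ((∀ d : D, ∃ c : C, Nonempty (F.obj c ≅ d)) ∧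
       (∀ (X Y : C) (α : F.obj X ⟶ F.obj Y), ∃ (X' : C) (α' : X' ⟶ Y) (π : X' ⟶ X),
          F.map α' = F.map π ≫ α ∧ IsIso (F.map π))) := by
  constructor
  · intro h
    constructor
    · intro d
      have : F.EssSurj := Localization.essSurj F (kerW F)
      exact ⟨F.objPreimage d, ⟨F.objObjPreimageIso d⟩⟩
    · intro X Y α
      obtain ⟨φ, hφ⟩ := Localization.exists_rightFraction F (kerW F) α
      refine ⟨φ.X', φ.f, φ.s, ?_, (kerW_iff_isIso F _).1 φ.hs⟩
      rw [hφ, MorphismProperty.RightFraction.map_s_comp_map]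
  · rintro ⟨ha, hb⟩
    set W := kerW F with hW
    have hF : W.IsInvertedBy F := kerW_isInvertedBy F
    let G : W.Localization ⥤ D := Localization.lift F hF W.Q
    have e : W.Q ⋙ G ≅ F := Localization.fac F hF W.Q
    have hQsurj : W.Q.EssSurj := Localization.essSurj W.Q W
    have nat : ∀ {A B : C} (f : A ⟶ B),
        G.map (W.Q.map f) = e.hom.app A ≫ F.map f ≫ e.inv.app B := by
      intro A B f
      have h := e.hom.naturality f
      dsimp at h
      rw [← Category.assoc, ← h]
      simp
    -- the key computation: any `α : F X ⟶ F Y` lifts to the localization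
    have key : ∀ (X Y : C) (α : F.obj X ⟶ F.obj Y), ∃ (g : W.Q.obj X ⟶ W.Q.obj Y),
        G.map g = e.hom.app X ≫ α ≫ e.inv.app Y := by
      intro X Y α
      obtain ⟨X', α', π, h1, h2⟩ := hb X Y α
      have hπ : W π := (kerW_iff_isIso F π).2 h2
      have hQπ : IsIso (W.Q.map π) := Localization.inverts W.Q W π hπ
      refine ⟨inv (W.Q.map π) ≫ W.Q.map α', ?_⟩
      have hGπ : G.map (W.Q.map π) = e.hom.app X' ≫ F.map π ≫ e.inv.app X := nat π
      have hcan : G.map (W.Q.map π) ≫ G.map (inv (W.Q.map π) ≫ W.Q.map α') =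
          G.map (W.Q.map α') := by
        rw [← G.map_comp, IsIso.hom_inv_id_assoc]
      rw [← cancel_epi (G.map (W.Q.map π)), hcan, nat α', h1, hGπ]
      simp only [Category.assoc, Iso.inv_hom_id_app_assoc]
    have hGfull : G.Full := by
      refine ⟨fun {A B} f => ?_⟩
      let X := W.Q.objPreimage A
      let Y := W.Q.objPreimage B
      let a : W.Q.obj X ≅ A := W.Q.objObjPreimageIso A
      let b : W.Q.obj Y ≅ B := W.Q.objObjPreimageIso B
      obtain ⟨g, hg⟩ := key X Y
        (e.inv.app X ≫ G.map a.hom ≫ f ≫ G.map b.inv ≫ e.hom.app Y)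
      refine ⟨a.inv ≫ g ≫ b.hom, ?_⟩
      simp only [G.map_comp, hg]
      simp [← G.map_comp_assoc, ← G.map_comp]
    have hGfaithful : G.Faithful := by
      refine ⟨fun {A B} g₁ g₂ hg => ?_⟩
      let X := W.Q.objPreimage A
      let Y := W.Q.objPreimage B
      let a : W.Q.obj X ≅ A := W.Q.objObjPreimageIso A
      let b : W.Q.obj Y ≅ B := W.Q.objObjPreimageIso B
      suffices h : a.hom ≫ g₁ ≫ b.inv = a.hom ≫ g₂ ≫ b.inv by
        rw [← cancel_epi a.hom, ← cancel_mono b.inv]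
        simpa using h
      set h₁ := a.hom ≫ g₁ ≫ b.inv with hh₁
      set h₂ := a.hom ≫ g₂ ≫ b.inv with hh₂
      have hGh : G.map h₁ = G.map h₂ := by
        simp only [hh₁, hh₂, G.map_comp, hg]
      obtain ⟨φ₁, hφ₁⟩ := Localization.exists_rightFraction W.Q W h₁
      obtain ⟨φ₂, hφ₂⟩ := Localization.exists_rightFraction W.Q W h₂
      -- β is the common image of h₁, h₂ in D (transported along e)
      set β : F.obj X ⟶ F.obj Y := e.inv.app X ≫ G.map h₁ ≫ e.hom.app Y with hβ
      have fact : ∀ (φ : W.RightFraction X Y),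
          G.map (φ.map W.Q (Localization.inverts W.Q W)) = G.map h₁ →
          F.map φ.s ≫ β = F.map φ.f := by
        intro φ hφ
        have h0 := congrArg G.map (φ.map_s_comp_map W.Q (Localization.inverts W.Q W))
        rw [G.map_comp, hφ, nat φ.s, nat φ.f] at h0
        rw [hβ]
        simp only [Category.assoc] at h0 ⊢
        rw [← cancel_epi (e.hom.app φ.X'), ← cancel_mono (e.inv.app Y)]
        simpa using h0
      have fact₁ : F.map φ₁.s ≫ β = F.map φ₁.f := fact φ₁ (by rw [← hφ₁])
      have fact₂ : F.map φ₂.s ≫ β = F.map φ₂.f := fact φ₂ (by rw [← hφ₂, hGh])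
      -- common denominator via the right Ore condition
      obtain ⟨ψ, hψ⟩ := MorphismProperty.HasRightCalculusOfFractions.exists_rightFraction
        (MorphismProperty.LeftFraction.mk φ₁.s φ₂.s φ₂.hs)
      dsimp at hψ
      -- F (ψ.s ≫ φ₁.f) = F (ψ.f ≫ φ₂.f)
      have hFeq : F.map (ψ.s ≫ φ₁.f) = F.map (ψ.f ≫ φ₂.f) := by
        have e1 : F.map (ψ.s ≫ φ₁.f) = F.map (ψ.s ≫ φ₁.s) ≫ β := by
          rw [F.map_comp ψ.s φ₁.f, ← fact₁, F.map_comp ψ.s φ₁.s, Category.assoc]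
        have e2 : F.map (ψ.f ≫ φ₂.f) = F.map (ψ.f ≫ φ₂.s) ≫ β := by
          rw [F.map_comp ψ.f φ₂.f, ← fact₂, F.map_comp ψ.f φ₂.s, Category.assoc]
        rw [e1, e2, hψ]
      have hc : F.map (ψ.s ≫ φ₁.f - ψ.f ≫ φ₂.f) = 0 := by
        rw [F.map_sub, hFeq, sub_self]
      obtain ⟨V, φ₀, hφ₀iso, hφ₀⟩ := cancel_of_F_zero F hb _ hc
      have hcomp : (φ₀ ≫ ψ.s) ≫ φ₁.f = (φ₀ ≫ ψ.f) ≫ φ₂.f := by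
        rw [← sub_eq_zero]
        simpa [Preadditive.comp_sub] using hφ₀
      -- the common denominator σ
      have hσW : W (φ₀ ≫ ψ.s ≫ φ₁.s) := by
        show kerW F (φ₀ ≫ ψ.s ≫ φ₁.s)
        rw [kerW_iff_isIso]
        have h1 : IsIso (F.map ψ.s) := (kerW_iff_isIso F _).1 ψ.hs
        have h2 : IsIso (F.map φ₁.s) := (kerW_iff_isIso F _).1 φ₁.hs
        rw [F.map_comp, F.map_comp]
        infer_instance
      have hσiso : IsIso (W.Q.map (φ₀ ≫ ψ.s ≫ φ₁.s)) := Localization.inverts W.Q W _ hσW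
      rw [hφ₁, hφ₂, ← cancel_epi (W.Q.map (φ₀ ≫ ψ.s ≫ φ₁.s))]
      have e₁ : W.Q.map (φ₀ ≫ ψ.s ≫ φ₁.s) ≫ φ₁.map W.Q (Localization.inverts W.Q W) =
          W.Q.map ((φ₀ ≫ ψ.s) ≫ φ₁.f) := by
        simp only [Functor.map_comp, Category.assoc,
          MorphismProperty.RightFraction.map_s_comp_map]
      have e₂ : W.Q.map (φ₀ ≫ ψ.s ≫ φ₁.s) ≫ φ₂.map W.Q (Localization.inverts W.Q W) =
          W.Q.map ((φ₀ ≫ ψ.f) ≫ φ₂.f) := by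
        have : φ₀ ≫ ψ.s ≫ φ₁.s = φ₀ ≫ ψ.f ≫ φ₂.s := by
          rw [← hψ]
        rw [this]
        simp only [Functor.map_comp, Category.assoc,
          MorphismProperty.RightFraction.map_s_comp_map]
      rw [e₁, e₂, hcomp]
    have hGess : G.EssSurj := by
      refine ⟨fun d => ?_⟩
      obtain ⟨c, ⟨i⟩⟩ := ha d
      exact ⟨W.Q.obj c, ⟨e.app c ≪≫ i⟩⟩
    have : G.IsEquivalence := { }
    have : (W.Q ⋙ G).IsLocalization W := inferInstance
    exact Functor.IsLocalization.of_iso W e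
end

section
/- Let C be a triangulated category and let I be an ideal of C of the form Ann F for some cohomological functor F : C → A into an abelian category. Then I is saturated: for every exact triangle X' →^α X →^β X'' → ΣX' and every map φ : X → Y in C, if φ ∘ α ∈ I and β ∈ I then φ ∈ I. -/
open CategoryTheory CategoryTheory.Limits CategoryTheory.Pretriangulated

universe v₁ v₂ u₁ u₂

/-- If `I = Ann H` for a cohomological functor `H : C ⥤ A` from a triangulated category to
an abelian category, then `I` is saturated: for every distinguished triangle
`X' →α X →β X'' → ΣX'` and every `φ : X ⟶ Y`, if `φ ∘ α ∈ I` and `β ∈ I` then `φ ∈ I`. -/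
theorem stmt7 {C : Type u₁} [Category.{v₁} C] [HasZeroObject C] [HasShift C ℤ]
    [Preadditive C] [∀ n : ℤ, (shiftFunctor C n).Additive] [Pretriangulated C]
    {A : Type u₂} [Category.{v₂} A] [Abelian A]
    (H : C ⥤ A) [H.Additive]
    (hH : ∀ (T : Triangle C), (T ∈ distTriang C) →
      ∀ (w : H.map T.mor₁ ≫ H.map T.mor₂ = 0), (ShortComplex.mk _ _ w).Exact) :
    ∀ (T : Triangle C), (T ∈ distTriang C) → ∀ {Y : C} (φ : T.obj₂ ⟶ Y),
      H.map (T.mor₁ ≫ φ) = 0 → H.map T.mor₂ = 0 → H.map φ = 0 := by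
  intro T hT Y φ h1 h2
  have w : H.map T.mor₁ ≫ H.map T.mor₂ = 0 := by rw [h2, comp_zero]
  have hex := hH T hT w
  have : Epi (H.map T.mor₁) := hex.epi_f h2
  have : H.map T.mor₁ ≫ H.map φ = 0 := by rw [← H.map_comp, h1]
  rwa [← cancel_epi (H.map T.mor₁), comp_zero]
end

section
/- Let S be a triangulated category with arbitrary coproducts, and let F : S → T be an exact functor to a triangulated category T that preserves coproducts and has a right adjoint G. Then G preserves coproducts if and only if F sends compact objects of S to compact objects of T, provided S is compactly generated. -/
/-!
The adjunction gives `Hom(F X, -) ≅ Hom(X, G -)`, so if `G` preserves coproducts then `F` preserves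
compactness. Conversely, if `F X` is compact for every compact `X`, then for each compact `C` the
comparison map `∐ G Yᵢ ⟶ G (∐ Yᵢ)` induces a bijection on `Hom(C, -)`. Since compact objects are
closed under shifts, the cone of such a map receives no nonzero map from a compact object, so it
vanishes by compact generation and the comparison map is an isomorphism.
-/

open CategoryTheory CategoryTheory.Limits CategoryTheory.Pretriangulated

universe v u₁ u₂

/-- An object `X` of a preadditive category is compact if the functor `Hom(X, -)`
(with values in abelian groups) preserves all (set-indexed) coproducts. -/
def IsCompactObj {C : Type u₁} [Category.{v} C] [Preadditive C] (X : C) : Prop :=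
  ∀ ι : Type v, Nonempty
    (PreservesColimitsOfShape (Discrete ι) (preadditiveCoyoneda.obj (Opposite.op X)))

namespace CategoryTheory.Limits

variable {C : Type*} {D : Type*} {E : Type*} [Category C] [Category D] [Category E]
  {ι : Type*} [HasColimitsOfShape (Discrete ι) C] [HasColimitsOfShape (Discrete ι) D]
  [HasColimitsOfShape (Discrete ι) E]

lemma sigmaComparison_comp (G : C ⥤ D) (H : D ⥤ E) (Y : ι → C) :
    sigmaComparison (G ⋙ H) Y =
      sigmaComparison H (fun i => G.obj (Y i)) ≫ H.map (sigmaComparison G Y) := by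
  ext i
  refine (ι_comp_sigmaComparison (G ⋙ H) Y i).trans ?_
  refine Eq.trans ?_ (ι_comp_sigmaComparison_assoc H (fun i => G.obj (Y i)) i _).symm
  rw [← H.map_comp, ι_comp_sigmaComparison]
  rfl

lemma isIso_map_sigmaComparison (G : C ⥤ D) (H : D ⥤ E) (Y : ι → C)
    [PreservesColimit (Discrete.functor Y) (G ⋙ H)]
    [PreservesColimit (Discrete.functor fun i => G.obj (Y i)) H] :
    IsIso (H.map (sigmaComparison G Y)) := by
  have : IsIso (sigmaComparison H (fun i => G.obj (Y i)) ≫ H.map (sigmaComparison G Y)) := by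
    rw [← sigmaComparison_comp]
    infer_instance
  exact IsIso.of_isIso_comp_left (sigmaComparison H _) _

end CategoryTheory.Limits

namespace CategoryTheory.Adjunction

lemma injective_comp_map {C : Type*} {D : Type*} [Category C] [Category D]
    {F : C ⥤ D} {G : D ⥤ C} (adj : F ⊣ G) {A B : D} (f : A ⟶ B) (X : C)
    (hf : Function.Injective fun g : F.obj X ⟶ A => g ≫ f) :
    Function.Injective fun g : X ⟶ G.obj A => g ≫ G.map f := by
  intro g₁ g₂ h
  apply (adj.homEquiv X A).symm.injective
  apply hf
  simpa [← homEquiv_naturality_right_symm] using congrArg (adj.homEquiv X B).symm h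

variable {C : Type u₁} [Category.{v} C] [Preadditive C] {D : Type u₂} [Category.{v} D]
  [Preadditive D] {F : C ⥤ D} {G : D ⥤ C} [F.Additive]

noncomputable def preadditiveCoyonedaObjIso (adj : F ⊣ G) (X : C) :
    preadditiveCoyoneda.obj (Opposite.op (F.obj X)) ≅
      G ⋙ preadditiveCoyoneda.obj (Opposite.op X) :=
  NatIso.ofComponents (fun Y => (adj.homAddEquiv X Y).toAddCommGrpIso)
    (fun k => by ext f; exact adj.homEquiv_naturality_right f k)

lemma isCompactObj_obj (adj : F ⊣ G)
    (hG : ∀ ι : Type v, Nonempty (PreservesColimitsOfShape (Discrete ι) G))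
    {X : C} (hX : IsCompactObj X) : IsCompactObj (F.obj X) := fun ι => by
  obtain ⟨_⟩ := hG ι
  obtain ⟨_⟩ := hX ι
  exact ⟨preservesColimitsOfShape_of_natIso (adj.preadditiveCoyonedaObjIso X).symm⟩

end CategoryTheory.Adjunction

lemma IsCompactObj.shift {C : Type u₁} [Category.{v} C] [Preadditive C] [HasShift C ℤ]
    [∀ n : ℤ, (shiftFunctor C n).Additive] {X : C} (hX : IsCompactObj X) (n : ℤ) :
    IsCompactObj (X⟦n⟧) :=
  Adjunction.isCompactObj_obj (F := shiftFunctor C n) (shiftEquiv C n).toAdjunction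
    (fun _ => ⟨inferInstance⟩) hX

section Pretriangulated

variable {S : Type u₁} [Category.{v} S] [HasZeroObject S] [HasShift S ℤ]
  [Preadditive S] [∀ n : ℤ, (shiftFunctor S n).Additive] [Pretriangulated S]

lemma isIso_of_bijective_comp_of_isCompactObj
    (hgen : ∀ X : S, (∀ C : S, IsCompactObj C → ∀ f : C ⟶ X, f = 0) → IsZero X)
    {A B : S} (f : A ⟶ B)
    (hbij : ∀ C : S, IsCompactObj C → Function.Bijective fun g : C ⟶ A => g ≫ f) :
    IsIso f := by
  obtain ⟨Z, g, h, hT⟩ := distinguished_cocone_triangle f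
  have hfg : f ≫ g = 0 := comp_distTriang_mor_zero₁₂ _ hT
  have hhf : h ≫ f⟦1⟧' = 0 := comp_distTriang_mor_zero₃₁ _ hT
  refine (Triangle.isZero₃_iff_isIso₁ _ hT).1 (hgen Z fun C hC u => ?_)
  have hu : u ≫ h = 0 :=
    Adjunction.injective_comp_map (G := shiftFunctor S 1)
      (shiftEquiv' S (-1) 1 (by norm_num)).toAdjunction f C
      (hbij _ (hC.shift (-1))).1 (by simp [hhf])
  obtain ⟨w, rfl⟩ := Triangle.coyoneda_exact₃ _ hT u hu
  obtain ⟨v, rfl⟩ := (hbij C hC).2 w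
  change (v ≫ f) ≫ g = 0
  rw [Category.assoc, hfg, comp_zero]

lemma CategoryTheory.Adjunction.preservesColimitsOfShape_discrete_of_isCompactObj_obj
    [HasCoproducts.{v} S] {T : Type u₂} [Category.{v} T] [Preadditive T] [HasCoproducts.{v} T]
    (hgen : ∀ X : S, (∀ C : S, IsCompactObj C → ∀ f : C ⟶ X, f = 0) → IsZero X)
    {F : S ⥤ T} {G : T ⥤ S} (adj : F ⊣ G) [F.Additive]
    (hF : ∀ X : S, IsCompactObj X → IsCompactObj (F.obj X)) (ι : Type v) :
    PreservesColimitsOfShape (Discrete ι) G := by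
  suffices h : ∀ Y : ι → T, IsIso (sigmaComparison G Y) by
    have := fun Y => PreservesCoproduct.of_iso_comparison (i := h Y) G Y
    exact preservesColimitsOfShape_of_discrete G
  refine fun Y => isIso_of_bijective_comp_of_isCompactObj hgen _ fun C hC => ?_
  obtain ⟨_⟩ := hC ι
  obtain ⟨_⟩ := hF C hC ι
  have : PreservesColimitsOfShape (Discrete ι) (G ⋙ preadditiveCoyoneda.obj (Opposite.op C)) :=
    preservesColimitsOfShape_of_natIso (adj.preadditiveCoyonedaObjIso C)
  have := isIso_map_sigmaComparison G (preadditiveCoyoneda.obj (Opposite.op C)) Y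
  exact ConcreteCategory.bijective_of_isIso ((preadditiveCoyoneda.obj (Opposite.op C)).map _)

end Pretriangulated

/-- Let `S` be a compactly generated triangulated category and `F : S ⥤ T` an exact functor
preserving coproducts, with right adjoint `G`. Then `G` preserves coproducts if and only if
`F` preserves compactness. -/
theorem stmt8 {S : Type u₁} [Category.{v} S] [HasZeroObject S] [HasShift S ℤ]
    [Preadditive S] [∀ n : ℤ, (shiftFunctor S n).Additive] [Pretriangulated S]
    [HasCoproducts.{v} S]
    {T : Type u₂} [Category.{v} T] [HasZeroObject T] [HasShift T ℤ]
    [Preadditive T] [∀ n : ℤ, (shiftFunctor T n).Additive] [Pretriangulated T]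
    [HasCoproducts.{v} T]
    -- `S` is compactly generated:
    (hsmall : ∃ (ι : Type v) (g : ι → S), ∀ X : S, IsCompactObj X → ∃ i, Nonempty (X ≅ g i))
    (hgen : ∀ X : S, (∀ C : S, IsCompactObj C → ∀ f : C ⟶ X, f = 0) → IsZero X)
    (F : S ⥤ T) [F.CommShift ℤ] [F.IsTriangulated]
    [∀ ι : Type v, PreservesColimitsOfShape (Discrete ι) F]
    (G : T ⥤ S) (adj : F ⊣ G) :
    (∀ ι : Type v, Nonempty (PreservesColimitsOfShape (Discrete ι) G)) ↔
      (∀ X : S, IsCompactObj X → IsCompactObj (F.obj X)) :=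
  ⟨fun hG _ hX => adj.isCompactObj_obj hG hX,
    fun hF ι => ⟨adj.preservesColimitsOfShape_discrete_of_isCompactObj_obj hgen hF ι⟩⟩
end

section
/- Let R be a ring and let a be a two-sided ideal contained in the Jacobson radical of R. If X is a bounded complex of finitely generated projective R-modules such that X ⊗_R R/a is contractible (i.e., zero in the homotopy category K^b(R/a)), then X is contractible in K^b(R). -/
open CategoryTheory CategoryTheory.Limits

universe u

/-! Lift a contracting homotopy of `X ⊗ R/a` along the degreewise surjective unit
`X → X ⊗ R/a`, using that the `X^i` are projective. The resulting null-homotopic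
endomorphism `φ = ds + sd` of `X` is the identity modulo `a`, so by Nakayama it is surjective,
hence bijective, in each degree, as the `X^i` are finitely generated. Then `𝟙 = φ⁻¹ ≫ φ` is
null-homotopic as well. -/

namespace Homotopy

variable {ι V : Type*} [Category V] [Preadditive V] {c : ComplexShape ι}

theorem nullHomotopicMap'_hom_eq_sub {X Y : HomologicalComplex V c} {f g : X ⟶ Y}
    (H : Homotopy f g) : nullHomotopicMap' (fun i j _ => H.hom i j) = f - g := by
  classical
  have hzero : ∀ i j, dite (c.Rel j i) (fun _ => H.hom i j) (fun _ => 0) = H.hom i j :=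
    fun i j => dite_eq_left_iff.2 fun h => (H.zero i j h).symm
  ext n
  simp only [nullHomotopicMap', hzero, HomologicalComplex.sub_f_apply, H.comm n]
  simp [nullHomotopicMap]

theorem nonempty_id_zero_of_isIso {X : HomologicalComplex V c} {φ : X ⟶ X} [IsIso φ]
    (H : Homotopy φ 0) : Nonempty (Homotopy (𝟙 X) 0) :=
  ⟨(ofEq (IsIso.inv_hom_id φ).symm).trans ((H.compLeft (inv φ)).trans (ofEq comp_zero))⟩

theorem exists_comp_eq_of_projective {X Y : HomologicalComplex V c} (η : X ⟶ Y)
    [∀ i, Epi (η.f i)] [∀ i, Projective (X.X i)] (H : Homotopy (𝟙 Y) 0) :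
    ∃ φ : X ⟶ X, Nonempty (Homotopy φ 0) ∧ φ ≫ η = η := by
  let s : ∀ i j, c.Rel j i → (X.X i ⟶ X.X j) := fun i j _ =>
    Projective.factorThru (η.f i ≫ H.hom i j) (η.f j)
  refine ⟨nullHomotopicMap' s, ⟨nullHomotopy' s⟩, ?_⟩
  calc nullHomotopicMap' s ≫ η
      = η ≫ nullHomotopicMap' (fun i j _ => H.hom i j) := by
        rw [nullHomotopicMap'_comp, comp_nullHomotopicMap']
        simp only [s, Projective.factorThru_comp]
    _ = η := by rw [H.nullHomotopicMap'_hom_eq_sub, sub_zero, Category.comp_id]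

end Homotopy

theorem LinearMap.bijective_of_mkQ_comp_eq_mkQ {R M : Type*} [CommRing R] [AddCommGroup M]
    [Module R M] [Module.Finite R M] {I : Ideal R} (hI : I ≤ Ideal.jacobson ⊥) (f : M →ₗ[R] M)
    (hf : (I • ⊤ : Submodule R M).mkQ ∘ₗ f = (I • ⊤ : Submodule R M).mkQ) :
    Function.Bijective f :=
  OrzechProperty.bijective_of_surjective_endomorphism f <|
    f.surjective_of_surjective_comp_mkQ I hI (by rw [hf]; exact Submodule.mkQ_surjective _)

section ExtendScalars

variable {R : Type u} [CommRing R] (a : Ideal R)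

theorem ModuleCat.extendScalars_unit_app_quotient_hom (M : ModuleCat.{u} R) :
    ((ExtendRestrictScalarsAdj.unit.{u, u, u} (Ideal.Quotient.mk a)).app M).hom =
      (TensorProduct.quotTensorEquivQuotSMul M a).symm.toLinearMap ∘ₗ
        (a • ⊤ : Submodule R M).mkQ :=
  rfl

instance ModuleCat.epi_extendScalars_unit_app_quotient (M : ModuleCat.{u} R) :
    Epi ((ExtendRestrictScalarsAdj.unit.{u, u, u} (Ideal.Quotient.mk a)).app M) := by
  rw [ModuleCat.epi_iff_surjective]
  exact (TensorProduct.quotTensorEquivQuotSMul M a).symm.surjective.comp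
    (Submodule.mkQ_surjective _)

theorem ModuleCat.isIso_of_comp_extendScalars_unit_app_quotient (ha : a ≤ Ideal.jacobson ⊥)
    {M : ModuleCat.{u} R} [Module.Finite R M] (φ : M ⟶ M)
    (hφ : φ ≫ (ExtendRestrictScalarsAdj.unit.{u, u, u} (Ideal.Quotient.mk a)).app M =
      (ExtendRestrictScalarsAdj.unit.{u, u, u} (Ideal.Quotient.mk a)).app M) :
    IsIso φ := by
  rw [ConcreteCategory.isIso_iff_bijective]
  refine φ.hom.bijective_of_mkQ_comp_eq_mkQ ha ?_
  have h := congrArg ModuleCat.Hom.hom hφ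
  rw [ModuleCat.hom_comp, ModuleCat.extendScalars_unit_app_quotient_hom] at h
  exact LinearMap.ext fun x => (TensorProduct.quotTensorEquivQuotSMul M a).symm.injective
    (LinearMap.congr_fun h x)

end ExtendScalars

theorem stmt10_general {R : Type u} [CommRing R] (a : Ideal R) (ha : a ≤ Ideal.jacobson ⊥)
    (X : CochainComplex (ModuleCat.{u} R) ℤ)
    (hfgproj : ∀ i : ℤ, Module.Finite R (X.X i) ∧ Projective (X.X i))
    (hzero : IsZero
      ((HomotopyCategory.quotient (ModuleCat.{u} (R ⧸ a)) (ComplexShape.up ℤ)).obj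
        (((ModuleCat.extendScalars (Ideal.Quotient.mk a) :
            ModuleCat.{u} R ⥤ ModuleCat.{u} (R ⧸ a)).mapHomologicalComplex
            (ComplexShape.up ℤ)).obj X))) :
    IsZero ((HomotopyCategory.quotient (ModuleCat.{u} R) (ComplexShape.up ℤ)).obj X) := by
  rw [HomotopyCategory.isZero_quotient_obj_iff] at hzero ⊢
  obtain ⟨H⟩ := hzero
  let unit := ModuleCat.ExtendRestrictScalarsAdj.unit.{u, u, u} (Ideal.Quotient.mk a)
  let η : X ⟶ ((ModuleCat.restrictScalars (Ideal.Quotient.mk a)).mapHomologicalComplex _).obj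
      (((ModuleCat.extendScalars (Ideal.Quotient.mk a)).mapHomologicalComplex _).obj X) :=
    { f := fun i => unit.app (X.X i)
      comm' := fun i j _ => (unit.naturality (X.d i j)).symm }
  have : ∀ i, Projective (X.X i) := fun i => (hfgproj i).2
  have : ∀ i, Epi (η.f i) := fun i => ModuleCat.epi_extendScalars_unit_app_quotient a (X.X i)
  obtain ⟨φ, ⟨hφ⟩, hφη⟩ := Homotopy.exists_comp_eq_of_projective η <|
    (Homotopy.ofEq (CategoryTheory.Functor.map_id _ _).symm).trans <|
      ((ModuleCat.restrictScalars _).mapHomotopy H).trans <|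
        Homotopy.ofEq (CategoryTheory.Functor.map_zero _ _ _)
  have : ∀ i, IsIso (φ.f i) := fun i =>
    have := (hfgproj i).1
    ModuleCat.isIso_of_comp_extendScalars_unit_app_quotient a ha (φ.f i)
      (congrArg (fun f => HomologicalComplex.Hom.f f i) hφη)
  have := HomologicalComplex.Hom.isIso_of_components φ
  exact hφ.nonempty_id_zero_of_isIso

/-- Let `a` be an ideal contained in the Jacobson radical of `R`, and `X` a bounded complex
of finitely generated projective `R`-modules. If `X ⊗_R R/a` is contractible (zero in the
homotopy category `K^b(R/a)`), then `X` is contractible in `K^b(R)`. -/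
theorem stmt10 {R : Type u} [CommRing R] (a : Ideal R) (ha : a ≤ Ideal.jacobson ⊥)
    (X : CochainComplex (ModuleCat.{u} R) ℤ)
    (hbdd : ∃ m n : ℤ, ∀ i : ℤ, (i < m ∨ n < i) → IsZero (X.X i))
    (hfgproj : ∀ i : ℤ, Module.Finite R (X.X i) ∧ Projective (X.X i))
    (hzero : IsZero
      ((HomotopyCategory.quotient (ModuleCat.{u} (R ⧸ a)) (ComplexShape.up ℤ)).obj
        (((ModuleCat.extendScalars (Ideal.Quotient.mk a) :
            ModuleCat.{u} R ⥤ ModuleCat.{u} (R ⧸ a)).mapHomologicalComplex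
            (ComplexShape.up ℤ)).obj X))) :
    IsZero ((HomotopyCategory.quotient (ModuleCat.{u} R) (ComplexShape.up ℤ)).obj X) :=
  stmt10_general a ha X hfgproj hzero
end

section
/- Let R be a Bézout domain (an integral domain in which every finitely generated ideal is principal) and a an ideal of R. Then Tor_1^R(R/a, R/a) ≅ a/a², and Tor_i^R(R/a, R/a) = 0 for all i > 1. In particular, if a is idempotent (a² = a), then the quotient map R → R/a is a homological epimorphism. -/
open CategoryTheory CategoryTheory.Limits

universe u

/-!
Tensoring `0 → a → R → R/a → 0` with a projective resolution `P` of `R/a` gives a short exact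
sequence of complexes `a ⊗ P → R ⊗ P → R/a ⊗ P`, whose homology computes `Tor(-, R/a)`. As `R` is
flat, the long exact sequence gives `Tor_{n+2}(R/a, R/a) ≅ Tor_{n+1}(a, R/a)`, which vanishes when
`a` is flat (every ideal of a Bézout domain is, being torsion-free), and identifies
`Tor_1(R/a, R/a)` with the kernel of `a ⊗ R/a → R ⊗ R/a`. That map is zero since
`x ⊗ q = 1 ⊗ x q`, so `Tor_1(R/a, R/a) ≅ a ⊗ R/a ≅ a/a²`.
-/

open MonoidalCategory TensorProduct

theorem LinearMap.bijective_mul'_of_surjective_algebraMap {R S : Type*} [CommRing R]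
    [CommRing S] [Algebra R S] (h : Function.Surjective (algebraMap R S)) :
    Function.Bijective (LinearMap.mul' R S) :=
  have := Algebra.isEpi_of_surjective_algebraMap R S h
  (TensorProduct.lid' R S S).bijective

theorem Ideal.flat_of_isBezout {R : Type u} [CommRing R] [IsDomain R] [IsBezout R]
    (a : Ideal R) : Module.Flat R a := by
  rw [Module.Flat.flat_iff_torsion_eq_bot_of_isBezout,
    ← Submodule.isTorsionFree_iff_torsion_eq_bot]
  infer_instance

namespace CategoryTheory.ProjectiveResolution

variable {R : Type u} [CommRing R] {Y : ModuleCat.{u} R} (P : ProjectiveResolution Y)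

noncomputable abbrev tensorComplex (M : ModuleCat.{u} R) : ChainComplex (ModuleCat.{u} R) ℕ :=
  (((tensoringLeft _).obj M).mapHomologicalComplex _).obj P.complex

noncomputable abbrev tensorMap {M N : ModuleCat.{u} R} (f : M ⟶ N) :
    P.tensorComplex M ⟶ P.tensorComplex N :=
  (NatTrans.mapHomologicalComplex ((tensoringLeft _).map f) _).app P.complex

theorem isZero_homology_tensorComplex_succ_of_flat (M : ModuleCat.{u} R) [Module.Flat R M]
    (n : ℕ) : IsZero ((P.tensorComplex M).homology (n + 1)) := by
  rw [← HomologicalComplex.exactAt_iff_isZero_homology, HomologicalComplex.exactAt_iff]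
  have hsc : (P.tensorComplex M).sc (n + 1) = (P.complex.sc (n + 1)).map (tensorLeft M) := rfl
  rw [hsc]
  exact Module.Flat.lTensor_shortComplex_exact M _ (P.complex_exactAt_succ n)

noncomputable def tensorShortComplex (S : ShortComplex (ModuleCat.{u} R)) :
    ShortComplex (ChainComplex (ModuleCat.{u} R) ℕ) :=
  ShortComplex.mk (P.tensorMap S.f) (P.tensorMap S.g) (by
    ext n : 1
    change S.f ▷ _ ≫ S.g ▷ _ = 0
    rw [← comp_whiskerRight, S.zero, MonoidalPreadditive.zero_whiskerRight])

theorem shortExact_tensorShortComplex {S : ShortComplex (ModuleCat.{u} R)} (hS : S.ShortExact) :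
    (P.tensorShortComplex S).ShortExact :=
  HomologicalComplex.shortExact_of_degreewise_shortExact _ fun n =>
    hS.map_of_exact (tensorRight (P.complex.X n))

theorem opcyclesMap_tensorMap_zero_comp_fromLeftDerivedZero' {M N : ModuleCat.{u} R}
    (f : M ⟶ N) :
    HomologicalComplex.opcyclesMap (P.tensorMap f) 0 ≫
        P.fromLeftDerivedZero' ((tensoringLeft _).obj N) =
      P.fromLeftDerivedZero' ((tensoringLeft _).obj M) ≫ f ▷ Y := by
  simp only [← cancel_epi (HomologicalComplex.pOpcycles _ _),
    HomologicalComplex.p_opcyclesMap_assoc, pOpcycles_comp_fromLeftDerivedZero',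
    pOpcycles_comp_fromLeftDerivedZero'_assoc]
  exact (whisker_exchange _ _).symm

theorem homologyMap_tensorMap_zero_eq_zero {M N : ModuleCat.{u} R} (f : M ⟶ N) (hf : f ▷ Y = 0) :
    HomologicalComplex.homologyMap (P.tensorMap f) 0 = 0 := by
  have : HomologicalComplex.opcyclesMap (P.tensorMap f) 0 = 0 := by
    rw [← cancel_mono (P.fromLeftDerivedZero' ((tensoringLeft _).obj N)),
      opcyclesMap_tensorMap_zero_comp_fromLeftDerivedZero', hf, comp_zero, zero_comp]
  rw [← cancel_mono ((P.tensorComplex N).homologyι 0), HomologicalComplex.homologyι_naturality,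
    this, comp_zero, zero_comp]

noncomputable def homologyZeroTensorComplexIso (M : ModuleCat.{u} R) :
    (P.tensorComplex M).homology 0 ≅ M ⊗ Y :=
  ChainComplex.isoHomologyι₀ _ ≪≫ asIso (P.fromLeftDerivedZero' ((tensoringLeft _).obj M))

variable {S : ShortComplex (ModuleCat.{u} R)}

theorem isIso_δ_tensorShortComplex_one_zero (hS : S.ShortExact) [Module.Flat R S.X₂]
    (hf : S.f ▷ Y = 0) :
    IsIso ((P.shortExact_tensorShortComplex hS).δ 1 0 rfl) := by
  have hmono : Mono ((P.shortExact_tensorShortComplex hS).δ 1 0 rfl) :=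
    ((P.shortExact_tensorShortComplex hS).homology_exact₃ 1 0 rfl).mono_g
      ((P.isZero_homology_tensorComplex_succ_of_flat S.X₂ 0).eq_of_src _ _)
  have hepi : Epi ((P.shortExact_tensorShortComplex hS).δ 1 0 rfl) :=
    ((P.shortExact_tensorShortComplex hS).homology_exact₁ 1 0 rfl).epi_f
      (P.homologyMap_tensorMap_zero_eq_zero S.f hf)
  exact isIso_of_mono_of_epi _

theorem isZero_homology_tensorComplex_succ_succ (hS : S.ShortExact) [Module.Flat R S.X₁]
    [Module.Flat R S.X₂] (n : ℕ) : IsZero ((P.tensorComplex S.X₃).homology (n + 2)) :=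
  ((P.shortExact_tensorShortComplex hS).homology_exact₃ (n + 2) (n + 1) rfl).isZero_X₂
    ((P.isZero_homology_tensorComplex_succ_of_flat S.X₂ (n + 1)).eq_of_src _ _)
    ((P.isZero_homology_tensorComplex_succ_of_flat S.X₁ n).eq_of_tgt _ _)

noncomputable def homologyOneTensorComplexIso (hS : S.ShortExact) [Module.Flat R S.X₂]
    (hf : S.f ▷ Y = 0) : (P.tensorComplex S.X₃).homology 1 ≅ S.X₁ ⊗ Y :=
  -- `asIso` alone misses the instance: it is found through a different `Preadditive` structure.
  @asIso _ _ _ _ _ (P.isIso_δ_tensorShortComplex_one_zero hS hf) ≪≫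
    P.homologyZeroTensorComplexIso S.X₁

end CategoryTheory.ProjectiveResolution

namespace Ideal

variable {R : Type u} [CommRing R] (a : Ideal R)

noncomputable abbrev shortComplex : ShortComplex (ModuleCat.{u} R) :=
  ModuleCat.shortComplexOfCompEqZero a.subtype a.mkQ
    (LinearMap.exact_subtype_mkQ a).linearMap_comp_eq_zero

theorem shortExact_shortComplex : a.shortComplex.ShortExact :=
  ModuleCat.shortComplex_shortExact _ (LinearMap.exact_subtype_mkQ a) a.injective_subtype
    a.mkQ_surjective

theorem subtype_whiskerRight_quotient_eq_zero :
    ModuleCat.ofHom a.subtype ▷ ModuleCat.of R (R ⧸ a) = 0 := by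
  ext : 1
  refine TensorProduct.ext' fun x q => ?_
  obtain ⟨r, rfl⟩ := Ideal.Quotient.mk_surjective q
  change (x : R) ⊗ₜ[R] Ideal.Quotient.mk a r = 0
  rw [← mul_one (x : R), ← smul_eq_mul, smul_tmul, Algebra.smul_def,
    Ideal.Quotient.algebraMap_eq, ← map_mul,
    Ideal.Quotient.eq_zero_iff_mem.2 (a.mul_mem_right r x.2), tmul_zero]

noncomputable def torOneQuotientIsoCotangent :
    ((Tor (ModuleCat.{u} R) 1).obj (ModuleCat.of R (R ⧸ a))).obj (ModuleCat.of R (R ⧸ a)) ≅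
      ModuleCat.of R a.Cotangent :=
  let P := projectiveResolution (ModuleCat.of R (R ⧸ a))
  P.isoLeftDerivedObj _ 1 ≪≫
    P.homologyOneTensorComplexIso a.shortExact_shortComplex
      a.subtype_whiskerRight_quotient_eq_zero ≪≫
    (tensorQuotEquivQuotSMul a a).toModuleIso

theorem isZero_tor_quotient_of_flat [Module.Flat R a] (n : ℕ) :
    IsZero (((Tor (ModuleCat.{u} R) (n + 2)).obj (ModuleCat.of R (R ⧸ a))).obj
      (ModuleCat.of R (R ⧸ a))) :=
  let P := projectiveResolution (ModuleCat.of R (R ⧸ a))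
  (P.isZero_homology_tensorComplex_succ_succ a.shortExact_shortComplex n).of_iso
    (P.isoLeftDerivedObj _ _)

end Ideal

/-- Over a Bézout domain `R`, for any ideal `a` one has `Tor_1^R(R/a, R/a) ≅ a/a²` and
`Tor_i^R(R/a, R/a) = 0` for `i > 1`; in particular, if `a` is idempotent then the quotient
map `R → R/a` is a homological epimorphism. -/
theorem stmt11 {R : Type u} [CommRing R] [IsDomain R] [IsBezout R] (a : Ideal R) :
    Nonempty ((((Tor (ModuleCat.{u} R) 1).obj (ModuleCat.of R (R ⧸ a))).obj
        (ModuleCat.of R (R ⧸ a))) ≅ ModuleCat.of R a.Cotangent) ∧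
    (∀ i : ℕ, 1 < i →
      IsZero (((Tor (ModuleCat.{u} R) i).obj (ModuleCat.of R (R ⧸ a))).obj
        (ModuleCat.of R (R ⧸ a)))) ∧
    (a * a = a →
      (Function.Bijective (LinearMap.mul' R (R ⧸ a)) ∧
        ∀ i : ℕ, 1 ≤ i →
          IsZero (((Tor (ModuleCat.{u} R) i).obj (ModuleCat.of R (R ⧸ a))).obj
            (ModuleCat.of R (R ⧸ a))))) := by
  have := a.flat_of_isBezout
  have isZero_tor (i : ℕ) (hi : 1 < i) : IsZero (((Tor (ModuleCat.{u} R) i).obj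
      (ModuleCat.of R (R ⧸ a))).obj (ModuleCat.of R (R ⧸ a))) := by
    obtain ⟨n, rfl⟩ : ∃ n, i = n + 2 := ⟨i - 2, by omega⟩
    exact a.isZero_tor_quotient_of_flat n
  refine ⟨⟨a.torOneQuotientIsoCotangent⟩, isZero_tor, fun haa =>
    ⟨LinearMap.bijective_mul'_of_surjective_algebraMap Ideal.Quotient.mk_surjective,
      fun i hi => ?_⟩⟩
  obtain rfl | hi := hi.eq_or_lt
  · have : Subsingleton a.Cotangent := a.cotangent_subsingleton_iff.2 haa
    exact (ModuleCat.isZero_of_subsingleton _).of_iso a.torOneQuotientIsoCotangent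
  · exact isZero_tor i hi
end

section
/- Let f : R → S be a ring homomorphism such that the chain map lifting problem has a positive solution: for every pair X, Y of bounded complexes of finitely generated projective R-modules and every chain map α : X ⊗_R S → Y ⊗_R S in K^b(S), there exist maps φ : X' → X and α' : X' → Y in K^b(R) with φ ⊗_R S invertible and α = (α' ⊗_R S) ∘ (φ ⊗_R S)^{-1}. Then the chain complex lifting problem has a positive solution: every complex Y in K^b(S) whose terms are of the form P^i ⊗_R S for finitely generated projective R-modules P^i is isomorphic in K^b(S) to X ⊗_R S for some X in K^b(R). -/
/-!
Write `E` for the objects of `K(S)` isomorphic to `X ⊗_R S` with `X` in `K^b(R)`. Since base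
change is a triangulated functor, the lifting hypothesis shows that `E` is closed under cones:
a morphism `X ⊗_R S ⟶ Y ⊗_R S` becomes, up to the invertible `φ ⊗_R S`, the image of a morphism
`α' : X' ⟶ Y`, and the cone of `α' ⊗_R S` is `cone(α') ⊗_R S`. Being also closed under shifts,
`E` is closed under extensions. A bounded complex `Y` is the extension, through a degreewise
split short exact sequence, of its stupid truncation below the top degree `n` by its term
`Y^n` placed in degree `n`, so induction on the length of `Y` shows that `Y` lies in `E`.
-/

open CategoryTheory CategoryTheory.Limits

universe u

/-- A bounded complex of finitely generated projective modules. -/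
def IsKb {R : Type u} [CommRing R] (X : CochainComplex (ModuleCat.{u} R) ℤ) : Prop :=
  (∀ i : ℤ, Module.Finite R (X.X i) ∧ Projective (X.X i)) ∧
  ∃ m n : ℤ, ∀ i : ℤ, (i < m ∨ n < i) → IsZero (X.X i)

namespace CategoryTheory.ObjectProperty

open Pretriangulated

instance isStableUnderShift_map {C D : Type*} [Category C] [Category D] {A : Type*} [AddMonoid A]
    [HasShift C A] [HasShift D A] (P : ObjectProperty C) [P.IsStableUnderShift A]
    (F : C ⥤ D) [F.CommShift A] : (P.map F).IsStableUnderShift A where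
  isStableUnderShiftBy a := ⟨by
    rintro Y ⟨X, hX, ⟨e⟩⟩
    exact ⟨X⟦a⟧, P.le_shift a X hX, ⟨(F.commShiftIso a).app X ≪≫ (shiftFunctor D a).mapIso e⟩⟩⟩

variable {C D : Type*} [Category C] [Category D]
  [HasZeroObject C] [HasShift C ℤ] [Preadditive C] [∀ n : ℤ, (shiftFunctor C n).Additive]
  [Pretriangulated C]
  [HasZeroObject D] [HasShift D ℤ] [Preadditive D] [∀ n : ℤ, (shiftFunctor D n).Additive]
  [Pretriangulated D]

lemma isTriangulatedClosed₃_map (P : ObjectProperty C) [P.IsTriangulatedClosed₃]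
    (F : C ⥤ D) [F.CommShift ℤ] [F.IsTriangulated]
    (hF : ∀ ⦃X Y : C⦄, P X → P Y → ∀ α : F.obj X ⟶ F.obj Y,
      ∃ (X' : C) (_ : P X') (φ : X' ⟶ X) (α' : X' ⟶ Y),
        IsIso (F.map φ) ∧ F.map φ ≫ α = F.map α') :
    (P.map F).IsTriangulatedClosed₃ := .mk' <| by
  rintro T hT ⟨X₁, h₁, ⟨e₁⟩⟩ ⟨X₂, h₂, ⟨e₂⟩⟩
  obtain ⟨X', h', φ, α', hφ, hα'⟩ := hF h₁ h₂ (e₁.hom ≫ T.mor₁ ≫ e₂.inv)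
  obtain ⟨Z, hZ, g, h, hcone⟩ := P.distinguished_cocone_triangle α' h' h₂
  refine ⟨Z, hZ, ⟨Triangle.π₃.mapIso (isoTriangleOfIso₁₂ _ _ (F.map_distinguished _ hcone) hT
    (@asIso _ _ _ _ (F.map φ) hφ ≪≫ e₁) e₂ ?_)⟩⟩
  change F.map α' ≫ e₂.hom = (F.map φ ≫ e₁.hom) ≫ T.mor₁
  rw [← hα']
  simp

end CategoryTheory.ObjectProperty

namespace ComplexShape.Embedding

variable {ι ι' : Type*} {c : ComplexShape ι} {c' : ComplexShape ι'} (e : c.Embedding c')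
  [e.IsTruncLE]

lemma hasLift_id_restriction {C : Type*} [Category C] [HasZeroMorphisms C]
    (K : HomologicalComplex C c') : e.HasLift (𝟙 (K.restriction e)) := by
  rintro j ⟨_, hj⟩ i' hi'
  obtain ⟨i, rfl⟩ := e.mem_prev hi'
  exact absurd hi' (hj i)

end ComplexShape.Embedding

lemma ComplexShape.embeddingUpIntLE_f_toNat_sub {p i : ℤ} (hi : i ≤ p) :
    (embeddingUpIntLE p).f (p - i).toNat = i := by
  simp only [embeddingUpIntLE_f]
  omega

namespace HomologicalComplex

section

variable {ι ι' : Type*} {c : ComplexShape ι} {c' : ComplexShape ι'} {C : Type*} [Category C]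
  [HasZeroMorphisms C]

lemma isZero_of_isZero_X {K : HomologicalComplex C c} (h : ∀ i, IsZero (K.X i)) : IsZero K :=
  (IsZero.iff_id_eq_zero _).2 (by ext i; exact (h i).eq_of_src _ _)

variable [HasZeroObject C] (e : c.Embedding c') [e.IsTruncLE] (K : HomologicalComplex C c')

noncomputable def toStupidTrunc : K ⟶ K.stupidTrunc e :=
  e.liftExtend (𝟙 _) (e.hasLift_id_restriction K)

lemma isIso_toStupidTrunc_f {i : ι} {i' : ι'} (hi : e.f i = i') :
    IsIso ((K.toStupidTrunc e).f i') :=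
  (e.isIso_liftExtend_f_iff _ _ hi).2 (by dsimp; infer_instance)

end

end HomologicalComplex

namespace CochainComplex

open HomologicalComplex ComplexShape

variable {C : Type*} [Category C] [Preadditive C] [HasZeroObject C]

lemma trianglehOfDegreewiseSplit_distinguished [HasBinaryBiproducts C]
    (S : ShortComplex (CochainComplex C ℤ)) (σ : ∀ n, (S.map (eval C _ n)).Splitting) :
    trianglehOfDegreewiseSplit S σ ∈ distTriang _ :=
  (HomotopyCategory.distinguished_iff_iso_trianglehOfDegreewiseSplit _).2 ⟨S, σ, ⟨Iso.refl _⟩⟩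

variable (Y : CochainComplex C ℤ) {n : ℤ}

lemma isZero_stupidTrunc_embeddingUpIntLE_X {p i : ℤ} (hi : p < i) :
    IsZero ((Y.stupidTrunc (embeddingUpIntLE p)).X i) :=
  Y.isZero_stupidTrunc_X _ i ((notMem_range_embeddingUpIntLE_iff p i).2 hi)

variable (hY : ∀ i, n < i → IsZero (Y.X i))

noncomputable def topTermShortComplex : ShortComplex (CochainComplex C ℤ) :=
  ShortComplex.mk (mkHomFromSingle (𝟙 (Y.X n)) fun j hj =>
      (hY j (by simp only [ComplexShape.up_Rel] at hj; omega)).eq_of_tgt _ _)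
    (Y.toStupidTrunc (embeddingUpIntLE (n - 1))) (by
      refine HomologicalComplex.hom_ext _ _ fun i => ?_
      by_cases hi : i = n
      · exact (Y.isZero_stupidTrunc_embeddingUpIntLE_X (by omega)).eq_of_tgt _ _
      · exact (isZero_single_obj_X (ComplexShape.up ℤ) n _ i hi).eq_of_src _ _)

noncomputable def topTermShortComplexSplitting (i : ℤ) :
    ((topTermShortComplex Y hY).map (eval C _ i)).Splitting :=
  if hi : i = n then
    .ofIsIsoOfIsZero _ (by
      subst hi
      change IsIso ((topTermShortComplex Y hY).f.f i)
      simp only [topTermShortComplex, mkHomFromSingle_f]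
      infer_instance)
      (Y.isZero_stupidTrunc_embeddingUpIntLE_X (by omega))
  else
    .ofIsZeroOfIsIso _ (isZero_single_obj_X (ComplexShape.up ℤ) n _ i hi) (by
      dsimp [topTermShortComplex]
      by_cases hi' : i ≤ n - 1
      · exact Y.isIso_toStupidTrunc_f _ (embeddingUpIntLE_f_toNat_sub hi')
      · exact isIso_of_source_target_iso_zero _ (hY i (by omega)).isoZero
          (Y.isZero_stupidTrunc_embeddingUpIntLE_X (by omega)).isoZero)

end CochainComplex

section Modules

variable {R : Type u} [CommRing R]

lemma ModuleCat.finite_of_isZero {M : ModuleCat.{u} R} (h : IsZero M) : Module.Finite R M :=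
  have := ModuleCat.subsingleton_of_isZero h
  inferInstance

lemma isKb_of_isZero_X {X : CochainComplex (ModuleCat.{u} R) ℤ} (h : ∀ i, IsZero (X.X i)) :
    IsKb X :=
  ⟨fun i => ⟨ModuleCat.finite_of_isZero (h i), (h i).projective⟩, 0, 0, fun i _ => h i⟩

lemma isKb_single (P : ModuleCat.{u} R) [Module.Finite R P] [Projective P] (n : ℤ) :
    IsKb ((HomologicalComplex.single _ (ComplexShape.up ℤ) n).obj P) := by
  refine ⟨fun i => ?_, n, n, fun i hi =>
    HomologicalComplex.isZero_single_obj_X _ _ _ _ (by omega)⟩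
  by_cases hi : i = n
  · subst hi
    let e := HomologicalComplex.singleObjXSelf (ComplexShape.up ℤ) i P
    exact ⟨Module.Finite.equiv e.toLinearEquiv.symm, Projective.of_iso e.symm inferInstance⟩
  · have h := HomologicalComplex.isZero_single_obj_X (ComplexShape.up ℤ) n P i hi
    exact ⟨ModuleCat.finite_of_isZero h, h.projective⟩

lemma IsKb.shift {X : CochainComplex (ModuleCat.{u} R) ℤ} (hX : IsKb X) (n : ℤ) :
    IsKb (X⟦n⟧) := by
  obtain ⟨hfp, m, m', hb⟩ := hX
  exact ⟨fun i => hfp (i + n), m - n, m' - n, fun i hi => hb (i + n) (by omega)⟩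

lemma IsKb.mappingCone {X Y : CochainComplex (ModuleCat.{u} R) ℤ} (hX : IsKb X) (hY : IsKb Y)
    (g : X ⟶ Y) : IsKb (CochainComplex.mappingCone g) := by
  obtain ⟨hXfp, mX, nX, hXb⟩ := hX
  obtain ⟨hYfp, mY, nY, hYb⟩ := hY
  have e i := HomologicalComplex.homotopyCofiber.XIsoBiprod g i (i + 1) rfl
  refine ⟨fun i => ?_, min (mX - 1) mY, max (nX - 1) nY, fun i hi => ?_⟩
  · obtain ⟨_, _⟩ := hXfp (i + 1)
    obtain ⟨_, _⟩ := hYfp i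
    exact ⟨Module.Finite.equiv (e i ≪≫ ModuleCat.biprodIsoProd _ _).toLinearEquiv.symm,
      Projective.of_iso (e i).symm inferInstance⟩
  · exact (biprod_isZero_iff _ _).2 ⟨hXb _ (by omega), hYb _ (by omega)⟩ |>.of_iso (e i)

open Pretriangulated HomotopyCategory

variable (R) in
def kb : ObjectProperty (HomotopyCategory (ModuleCat.{u} R) (ComplexShape.up ℤ)) :=
  fun K => IsKb K.as

instance : (kb R).IsStableUnderShift ℤ where
  isStableUnderShiftBy n := ⟨fun K (hK : IsKb K.as) => by
    change IsKb (K⟦n⟧).as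
    rw [show K⟦n⟧ = (quotient _ _).obj (K.as⟦n⟧) from Quotient.functor_obj_shift _ _ K.as n]
    exact hK.shift n⟩

instance : (kb R).IsTriangulatedClosed₃ where
  ext₃' T hT (h₁ : IsKb T.obj₁.as) (h₂ : IsKb T.obj₂.as) := by
    obtain ⟨g, hg⟩ := (quotient _ _).map_surjective
      (T.mor₁ : (quotient _ _).obj T.obj₁.as ⟶ (quotient _ _).obj T.obj₂.as)
    exact ⟨_, h₁.mappingCone h₂ g, ⟨Triangle.π₃.mapIso (isoTriangleOfIso₁₂ _ _ hT
      (mappingCone_triangleh_distinguished g) (Iso.refl _) (Iso.refl _)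
      (by rw [← hg]; exact (Category.comp_id _).trans (Category.id_comp _).symm))⟩⟩

variable {S : Type u} [CommRing S] (T : ModuleCat.{u} R ⥤ ModuleCat.{u} S) [T.Additive]

open ZeroObject

lemma kb_map_of_isZero {K : HomotopyCategory (ModuleCat.{u} S) (ComplexShape.up ℤ)}
    (hK : IsZero K) : (kb R).map (T.mapHomotopyCategory _) K :=
  ⟨(quotient _ _).obj 0,
    isKb_of_isZero_X fun i => (HomologicalComplex.eval _ _ i).map_isZero (isZero_zero _),
    ⟨(Functor.map_isZero _ ((quotient _ _).map_isZero (isZero_zero _))).iso hK⟩⟩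

lemma kb_map_quotient_single {M : ModuleCat.{u} S} {P : ModuleCat.{u} R} [Module.Finite R P]
    [Projective P] (e : M ≅ T.obj P) (n : ℤ) :
    (kb R).map (T.mapHomotopyCategory _)
      ((quotient _ _).obj ((HomologicalComplex.single _ (ComplexShape.up ℤ) n).obj M)) :=
  ⟨(quotient _ _).obj ((HomologicalComplex.single _ (ComplexShape.up ℤ) n).obj P), isKb_single P n,
    ⟨(quotient _ _).mapIso ((HomologicalComplex.singleMapHomologicalComplex T _ n).app P ≪≫
      (HomologicalComplex.single _ _ n).mapIso e.symm)⟩⟩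

lemma exists_finite_projective_iso_obj_of_isZero {M : ModuleCat.{u} S} (hM : IsZero M) :
    ∃ P : ModuleCat.{u} R, Module.Finite R P ∧ Projective P ∧ Nonempty (M ≅ T.obj P) :=
  ⟨0, ModuleCat.finite_of_isZero (isZero_zero _), (isZero_zero _).projective,
    ⟨hM.iso (T.map_isZero (isZero_zero _))⟩⟩

lemma kb_map_quotient_of_bounded
    [((kb R).map (T.mapHomotopyCategory (ComplexShape.up ℤ))).IsTriangulatedClosed₂]
    (Y : CochainComplex (ModuleCat.{u} S) ℤ) (m n : ℤ)
    (hY : ∀ i, (i < m ∨ n < i) → IsZero (Y.X i))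
    (hext : ∀ i, ∃ P : ModuleCat.{u} R, Module.Finite R P ∧ Projective P ∧
      Nonempty (Y.X i ≅ T.obj P)) :
    (kb R).map (T.mapHomotopyCategory _) ((quotient _ _).obj Y) := by
  wlog hmn : m - 1 ≤ n generalizing n
  · exact this (m - 1) (fun i hi => hY i (by omega)) le_rfl
  induction n, hmn using Int.leInduction generalizing Y with
  | base =>
    exact kb_map_of_isZero T ((quotient _ _).map_isZero
      (HomologicalComplex.isZero_of_isZero_X fun i => hY i (by omega)))
  | succ n _ ih =>
    have hYn : ∀ i, n + 1 < i → IsZero (Y.X i) := fun i hi => hY i (Or.inr hi)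
    let B := Y.stupidTrunc (ComplexShape.embeddingUpIntLE (n + 1 - 1))
    have hB : ∀ i, i ≤ n → Nonempty (B.X i ≅ Y.X i) := fun i hi =>
      ⟨Y.stupidTruncXIso _ (ComplexShape.embeddingUpIntLE_f_toNat_sub (by omega))⟩
    have hBn : ∀ i, n < i → IsZero (B.X i) := fun i hi =>
      Y.isZero_stupidTrunc_embeddingUpIntLE_X (by omega)
    refine ObjectProperty.ext_of_isTriangulatedClosed₂ _ _
      (CochainComplex.trianglehOfDegreewiseSplit_distinguished _
        (Y.topTermShortComplexSplitting hYn)) ?_ ?_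
    · obtain ⟨P, _, _, ⟨e⟩⟩ := hext (n + 1)
      exact kb_map_quotient_single T e (n + 1)
    · refine ih B (fun i => ?_) (fun i hi => ?_)
      · by_cases hin : i ≤ n
        · obtain ⟨P, hP, hP', ⟨e⟩⟩ := hext i
          exact ⟨P, hP, hP', ⟨(hB i hin).some ≪≫ e⟩⟩
        · exact exists_finite_projective_iso_obj_of_isZero T (hBn i (by omega))
      · by_cases hin : i ≤ n
        · exact (hY i (by omega)).of_iso (hB i hin).some
        · exact hBn i (by omega)

end Modules

theorem stmt12_general {R S : Type u} [CommRing R] [CommRing S]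
    (T : ModuleCat.{u} R ⥤ ModuleCat.{u} S)
    [T.Additive]
    (hlift : ∀ (X Y : CochainComplex (ModuleCat.{u} R) ℤ), IsKb X → IsKb Y →
      ∀ α : (T.mapHomotopyCategory (ComplexShape.up ℤ)).obj
              ((HomotopyCategory.quotient _ _).obj X) ⟶
            (T.mapHomotopyCategory (ComplexShape.up ℤ)).obj
              ((HomotopyCategory.quotient _ _).obj Y),
        ∃ (X' : CochainComplex (ModuleCat.{u} R) ℤ) (_ : IsKb X')
          (φ : (HomotopyCategory.quotient _ _).obj X' ⟶ (HomotopyCategory.quotient _ _).obj X)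
          (α' : (HomotopyCategory.quotient _ _).obj X' ⟶ (HomotopyCategory.quotient _ _).obj Y),
          IsIso ((T.mapHomotopyCategory (ComplexShape.up ℤ)).map φ) ∧
          (T.mapHomotopyCategory (ComplexShape.up ℤ)).map φ ≫ α =
            (T.mapHomotopyCategory (ComplexShape.up ℤ)).map α') :
    ∀ Y : CochainComplex (ModuleCat.{u} S) ℤ,
      (∃ m n : ℤ, ∀ i : ℤ, (i < m ∨ n < i) → IsZero (Y.X i)) →
      (∀ i : ℤ, ∃ P : ModuleCat.{u} R, Module.Finite R P ∧ Projective P ∧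
        Nonempty (Y.X i ≅ T.obj P)) →
      ∃ X : CochainComplex (ModuleCat.{u} R) ℤ, IsKb X ∧
        Nonempty ((T.mapHomotopyCategory (ComplexShape.up ℤ)).obj
            ((HomotopyCategory.quotient _ _).obj X) ≅
          (HomotopyCategory.quotient _ _).obj Y) := by
  rintro Y ⟨m, n, hY⟩ hext
  have : ((kb R).map (T.mapHomotopyCategory _)).IsTriangulatedClosed₃ :=
    (kb R).isTriangulatedClosed₃_map _ fun X Y hX hY α => by
      obtain ⟨X', hX', φ, α', h⟩ := hlift X.as Y.as hX hY α
      exact ⟨_, hX', φ, α', h⟩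
  have : ((kb R).map (T.mapHomotopyCategory _)).IsTriangulatedClosed₂ :=
    .of_isTriangulatedClosed₃
  obtain ⟨K, hK, e⟩ := kb_map_quotient_of_bounded T Y m n hY hext
  exact ⟨K.as, hK, e⟩

/-- If the chain map lifting problem for `f : R → S` has a positive solution, then the chain
complex lifting problem has a positive solution: every bounded complex over `S` whose terms
are extended from finitely generated projective `R`-modules is, up to isomorphism in
`K^b(S)`, extended from a bounded complex of finitely generated projectives over `R`. -/
theorem stmt12 {R S : Type u} [CommRing R] [CommRing S] (f : R →+* S)
    (T : ModuleCat.{u} R ⥤ ModuleCat.{u} S)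
    (hT : T = ModuleCat.extendScalars f) [T.Additive]
    (hlift : ∀ (X Y : CochainComplex (ModuleCat.{u} R) ℤ), IsKb X → IsKb Y →
      ∀ α : (T.mapHomotopyCategory (ComplexShape.up ℤ)).obj
              ((HomotopyCategory.quotient _ _).obj X) ⟶
            (T.mapHomotopyCategory (ComplexShape.up ℤ)).obj
              ((HomotopyCategory.quotient _ _).obj Y),
        ∃ (X' : CochainComplex (ModuleCat.{u} R) ℤ) (_ : IsKb X')
          (φ : (HomotopyCategory.quotient _ _).obj X' ⟶ (HomotopyCategory.quotient _ _).obj X)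
          (α' : (HomotopyCategory.quotient _ _).obj X' ⟶ (HomotopyCategory.quotient _ _).obj Y),
          IsIso ((T.mapHomotopyCategory (ComplexShape.up ℤ)).map φ) ∧
          (T.mapHomotopyCategory (ComplexShape.up ℤ)).map φ ≫ α =
            (T.mapHomotopyCategory (ComplexShape.up ℤ)).map α') :
    ∀ Y : CochainComplex (ModuleCat.{u} S) ℤ,
      (∃ m n : ℤ, ∀ i : ℤ, (i < m ∨ n < i) → IsZero (Y.X i)) →
      (∀ i : ℤ, ∃ P : ModuleCat.{u} R, Module.Finite R P ∧ Projective P ∧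
        Nonempty (Y.X i ≅ T.obj P)) →
      ∃ X : CochainComplex (ModuleCat.{u} R) ℤ, IsKb X ∧
        Nonempty ((T.mapHomotopyCategory (ComplexShape.up ℤ)).obj
            ((HomotopyCategory.quotient _ _).obj X) ≅
          (HomotopyCategory.quotient _ _).obj Y) :=
  stmt12_general T hlift
end

section
/- Let R be a ring and a a two-sided ideal. The full subcategory a^⊥ of Mod R consisting of modules annihilated by a is a Serre subcategory whose inclusion into Mod R admits both a left and a right adjoint if and only if a is idempotent (a² = a). -/
open CategoryTheory CategoryTheory.Limits

universe u

/-- The modules annihilated by a two-sided ideal `a`. -/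
def AnnihilatedBy {R : Type u} [Ring R] (a : TwoSidedIdeal R) (M : ModuleCat.{u} R) : Prop :=
  ∀ x ∈ a, ∀ m : M, x • m = 0

namespace Stmt13Aux

variable {R : Type u} [Ring R] (a : TwoSidedIdeal R)

/-- The submodule `a • M`. -/
def aTor (M : ModuleCat.{u} R) : Submodule R M :=
  Submodule.span R {m | ∃ x ∈ a, ∃ y : M, m = x • y}

lemma aTor_le {M : ModuleCat.{u} R} {N : Submodule R M}
    (h : ∀ x ∈ a, ∀ y : M, x • y ∈ N) : aTor a M ≤ N := by
  apply Submodule.span_le.2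
  rintro _ ⟨x, hx, y, rfl⟩
  exact h x hx y

lemma smul_mem_aTor {M : ModuleCat.{u} R} {x : R} (hx : x ∈ a) (y : M) :
    x • y ∈ aTor a M :=
  Submodule.subset_span ⟨x, hx, y, rfl⟩

/-- The left adjoint of the inclusion: `M ↦ M / aM`. -/
def Lfun : ModuleCat.{u} R ⥤ ObjectProperty.FullSubcategory (AnnihilatedBy a) where
  obj M := ⟨ModuleCat.of R (M ⧸ aTor a M), by
    intro x hx m
    obtain ⟨m, rfl⟩ := Submodule.Quotient.mk_surjective _ m
    rw [← Submodule.Quotient.mk_smul, Submodule.Quotient.mk_eq_zero]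
    exact smul_mem_aTor a hx m⟩
  map {M N} f := ObjectProperty.homMk (ModuleCat.ofHom (Submodule.mapQ (aTor a M) (aTor a N) f.hom
    (aTor_le a fun x hx y => by
      simp only [Submodule.mem_comap, map_smul]
      exact smul_mem_aTor a hx (f.hom y))))
  map_id M := by
    refine ObjectProperty.hom_ext _ (ModuleCat.hom_ext (LinearMap.ext fun m => ?_))
    obtain ⟨m, rfl⟩ := Submodule.Quotient.mk_surjective _ m
    simp [Submodule.mapQ_apply]
  map_comp {M N P} f g := by
    refine ObjectProperty.hom_ext _ (ModuleCat.hom_ext (LinearMap.ext fun m => ?_))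
    obtain ⟨m, rfl⟩ := Submodule.Quotient.mk_surjective _ m
    simp [Submodule.mapQ_apply]

/-- Adjunction between `Lfun` and the inclusion. -/
def Ladj : Lfun a ⊣ ObjectProperty.ι (AnnihilatedBy a) :=
  Adjunction.mkOfHomEquiv
    { homEquiv := fun M N =>
        { toFun := fun g => ModuleCat.ofHom (g.hom.hom ∘ₗ (aTor a M).mkQ)
          invFun := fun f => ObjectProperty.homMk (ModuleCat.ofHom
            ((aTor a M).liftQ f.hom (aTor_le a fun x hx y => by
            simp only [LinearMap.mem_ker, map_smul]
            exact N.property x hx (f.hom y))))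
          left_inv := fun g => by
            refine ObjectProperty.hom_ext _ (ModuleCat.hom_ext (LinearMap.ext fun m => ?_))
            obtain ⟨m, rfl⟩ := Submodule.Quotient.mk_surjective _ m
            rfl
          right_inv := fun f => by
            refine ModuleCat.hom_ext (LinearMap.ext fun m => ?_)
            rfl }
      homEquiv_naturality_left_symm := by
        intro M M' N f g
        refine ObjectProperty.hom_ext _ (ModuleCat.hom_ext (LinearMap.ext fun m => ?_))
        obtain ⟨m, rfl⟩ := Submodule.Quotient.mk_surjective _ m
        simp [Submodule.liftQ_apply, Submodule.mapQ_apply, Lfun]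
        rfl
      homEquiv_naturality_right := by
        intro M N N' f g
        rfl }

/-- The submodule of elements of `M` annihilated by `a`. -/
def annSub (M : ModuleCat.{u} R) : Submodule R M where
  carrier := {m | ∀ x ∈ a, x • m = 0}
  zero_mem' := fun x _ => smul_zero x
  add_mem' := fun {m n} hm hn x hx => by rw [smul_add, hm x hx, hn x hx, add_zero]
  smul_mem' := fun r m hm x hx => by
    rw [← mul_smul]
    exact hm (x * r) (TwoSidedIdeal.mul_mem_right a x r hx)

/-- The right adjoint of the inclusion: `N ↦ ann_N(a)`. -/
def Rfun : ModuleCat.{u} R ⥤ ObjectProperty.FullSubcategory (AnnihilatedBy a) where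
  obj N := ⟨ModuleCat.of R (annSub a N), by
    intro x hx m
    exact Subtype.ext (m.2 x hx)⟩
  map {M N} f := ObjectProperty.homMk (ModuleCat.ofHom
    (f.hom.restrict (p := annSub a M) (q := annSub a N)
    (fun m hm x hx => by rw [← map_smul, hm x hx, map_zero])))
  map_id M := rfl
  map_comp f g := rfl

/-- Adjunction between the inclusion and `Rfun`. -/
def Radj : ObjectProperty.ι (AnnihilatedBy a) ⊣ Rfun a :=
  Adjunction.mkOfHomEquiv
    { homEquiv := fun M N =>
        { toFun := fun f => ObjectProperty.homMk (ModuleCat.ofHom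
            (LinearMap.codRestrict (annSub a N) f.hom
            (fun m x hx => by rw [← map_smul, M.property x hx m, map_zero])))
          invFun := fun g => ModuleCat.ofHom ((annSub a N).subtype ∘ₗ g.hom.hom)
          left_inv := fun f => rfl
          right_inv := fun g => rfl }
      homEquiv_naturality_left_symm := fun f g => rfl
      homEquiv_naturality_right := fun f g => rfl }

/-- The submodule `a²` of `R`. -/
def a2 : Submodule R R := Submodule.span R {r | ∃ x ∈ a, ∃ y ∈ a, r = x * y}

/-- The submodule `a` of `R`. -/
def aI : Submodule R R := Submodule.span R {r | r ∈ a}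

lemma a2_le_aI : a2 a ≤ aI a := by
  apply Submodule.span_le.2
  rintro _ ⟨x, hx, y, hy, rfl⟩
  exact Submodule.subset_span (TwoSidedIdeal.mul_mem_left a x y hy)

lemma mem_of_mem_aI {r : R} (hr : r ∈ aI a) : r ∈ a := by
  induction hr using Submodule.span_induction with
  | mem r hr => exact hr
  | zero => exact a.zero_mem
  | add _ _ _ _ h1 h2 => exact a.add_mem h1 h2
  | smul c r _ h => exact TwoSidedIdeal.mul_mem_left a c r h

/-- The projection `R/a² → R/a`. -/
def gmap : ModuleCat.of R (R ⧸ a2 a) ⟶ ModuleCat.of R (R ⧸ aI a) :=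
  ModuleCat.ofHom (Submodule.mapQ (a2 a) (aI a) LinearMap.id fun _ hr => a2_le_aI a hr)

/-- The kernel of `gmap`. -/
def Kmod : Submodule R (R ⧸ a2 a) := LinearMap.ker (gmap a).hom

/-- The inclusion of the kernel. -/
def fmap : ModuleCat.of R (Kmod a) ⟶ ModuleCat.of R (R ⧸ a2 a) := ModuleCat.ofHom (Kmod a).subtype

/-- The short exact sequence `0 → K → R/a² → R/a → 0`. -/
def theSES : ShortComplex (ModuleCat.{u} R) :=
  ShortComplex.mk (fmap a) (gmap a) (ModuleCat.hom_ext (LinearMap.ext fun m => m.2))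

lemma theSES_shortExact : (theSES a).ShortExact := by
  haveI : Mono (theSES a).f :=
    (ModuleCat.mono_iff_injective (fmap a)).2 (Submodule.injective_subtype (Kmod a))
  haveI : Epi (theSES a).g := by
    refine (ModuleCat.epi_iff_surjective (gmap a)).2 fun m => ?_
    obtain ⟨r, rfl⟩ := Submodule.Quotient.mk_surjective _ m
    exact ⟨Submodule.Quotient.mk r, rfl⟩
  refine ⟨?_⟩
  rw [(theSES a).moduleCat_exact_iff_range_eq_ker]
  exact Submodule.range_subtype (Kmod a)

lemma annX1 : AnnihilatedBy a (theSES a).X₁ := by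
  intro y hy m
  refine Subtype.ext ?_
  obtain ⟨r, hr⟩ := Submodule.Quotient.mk_surjective (a2 a) m.1
  have hrm : m.1 = Submodule.Quotient.mk r := hr.symm
  have hg0 : Submodule.mapQ (a2 a) (aI a) LinearMap.id (fun _ hr => a2_le_aI a hr) m.1 = 0 :=
    m.2
  rw [hrm, Submodule.mapQ_apply, Submodule.Quotient.mk_eq_zero] at hg0
  have hrK : r ∈ a := mem_of_mem_aI a hg0
  show y • m.1 = 0
  rw [hrm, ← Submodule.Quotient.mk_smul, Submodule.Quotient.mk_eq_zero]
  exact Submodule.subset_span ⟨y, hy, r, hrK, rfl⟩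

lemma annX3 : AnnihilatedBy a (theSES a).X₃ := by
  intro y hy m
  obtain ⟨r, rfl⟩ := Submodule.Quotient.mk_surjective _ (m : R ⧸ aI a)
  show y • (Submodule.Quotient.mk r : R ⧸ aI a) = 0
  rw [← Submodule.Quotient.mk_smul, Submodule.Quotient.mk_eq_zero]
  exact Submodule.subset_span (TwoSidedIdeal.mul_mem_right a y r hy)

end Stmt13Aux

/-- For a two-sided ideal `a` of `R`, the full subcategory `a^⊥` of modules annihilated
by `a` is a Serre subcategory whose inclusion admits both a left and a right adjoint if
and only if `a` is idempotent (`a² = a`, i.e. every element of `a` is a finite sum of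
products of two elements of `a`). -/
theorem stmt13 {R : Type u} [Ring R] (a : TwoSidedIdeal R) :
    ((∀ S : ShortComplex (ModuleCat.{u} R), S.ShortExact →
        (AnnihilatedBy a S.X₂ ↔ (AnnihilatedBy a S.X₁ ∧ AnnihilatedBy a S.X₃))) ∧
      (ObjectProperty.ι (AnnihilatedBy a)).IsRightAdjoint ∧
      (ObjectProperty.ι (AnnihilatedBy a)).IsLeftAdjoint) ↔
    (∀ x ∈ a, ∃ (n : ℕ) (u v : Fin n → R),
      (∀ i, u i ∈ a ∧ v i ∈ a) ∧ x = ∑ i, u i * v i) := by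
  constructor
  · rintro ⟨hSerre, -, -⟩
    intro x hx
    have hX2 : AnnihilatedBy a (Stmt13Aux.theSES a).X₂ :=
      ((hSerre _ (Stmt13Aux.theSES_shortExact a)).2 ⟨Stmt13Aux.annX1 a, Stmt13Aux.annX3 a⟩)
    have hx2 : x ∈ Submodule.span R {r | ∃ x ∈ a, ∃ y ∈ a, r = x * y} := by
      have : x • (Submodule.Quotient.mk (1 : R) : R ⧸ Stmt13Aux.a2 a) = 0 :=
        hX2 x hx (Submodule.Quotient.mk (1 : R))
      rw [← Submodule.Quotient.mk_smul, Submodule.Quotient.mk_eq_zero] at this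
      simpa [Stmt13Aux.a2] using this
    clear hx hX2
    induction hx2 using Submodule.span_induction with
    | mem r hr =>
      obtain ⟨u, hu, v, hv, rfl⟩ := hr
      exact ⟨1, fun _ => u, fun _ => v, fun _ => ⟨hu, hv⟩, by simp⟩
    | zero => exact ⟨0, ![], ![], fun i => i.elim0, by simp⟩
    | add p q _ _ h1 h2 =>
      obtain ⟨n1, u1, v1, h1a, rfl⟩ := h1
      obtain ⟨n2, u2, v2, h2a, rfl⟩ := h2
      refine ⟨n1 + n2, Fin.append u1 u2, Fin.append v1 v2, ?_, ?_⟩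
      · intro i
        refine Fin.addCases (fun j => ?_) (fun j => ?_) i
        · rw [Fin.append_left, Fin.append_left]; exact h1a j
        · rw [Fin.append_right, Fin.append_right]; exact h2a j
      · rw [Fin.sum_univ_add]
        congr 1 <;> refine Finset.sum_congr rfl fun j _ => ?_
        · rw [Fin.append_left, Fin.append_left]
        · rw [Fin.append_right, Fin.append_right]
    | smul c r _ h =>
      obtain ⟨n, u, v, ha', rfl⟩ := h
      refine ⟨n, fun i => c * u i, v,
        fun i => ⟨TwoSidedIdeal.mul_mem_left a c _ (ha' i).1, (ha' i).2⟩, ?_⟩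
      rw [smul_eq_mul, Finset.mul_sum]
      exact Finset.sum_congr rfl fun i _ => (mul_assoc c (u i) (v i)).symm
  · intro hidem
    refine ⟨?_, (Stmt13Aux.Ladj a).isRightAdjoint, (Stmt13Aux.Radj a).isLeftAdjoint⟩
    intro S hS
    constructor
    · intro h2
      constructor
      · intro x hx m
        have hinj := hS.moduleCat_injective_f
        apply hinj
        rw [map_smul, h2 x hx (S.f m), map_zero]
      · intro x hx m
        obtain ⟨m₂, rfl⟩ := hS.moduleCat_surjective_g m
        rw [← map_smul, h2 x hx m₂, map_zero]
    · rintro ⟨h1, h3⟩ x hx m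
      obtain ⟨n, u, v, huv, rfl⟩ := hidem x hx
      rw [Finset.sum_smul]
      refine Finset.sum_eq_zero fun i _ => ?_
      have hvm : S.g ((v i) • m) = 0 := by
        rw [map_smul, h3 (v i) (huv i).2 (S.g m)]
      have : (v i) • m ∈ LinearMap.range S.f.hom := by
        rw [hS.exact.moduleCat_range_eq_ker]
        exact hvm
      obtain ⟨m₁, hm₁⟩ := this
      calc (u i * v i) • m = u i • (v i • m) := mul_smul _ _ _
        _ = u i • (S.f m₁) := by rw [hm₁]
        _ = S.f (u i • m₁) := (map_smul S.f.hom _ _).symm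
        _ = S.f 0 := by rw [h1 (u i) (huv i).1 m₁]
        _ = 0 := map_zero _
end
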